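/- arXiv:2407.06854 — 3 statements merged into one kernel-verified Lean document; each statement's English description precedes it below -/
import Mathlib

section
/- Let n ≥ 2 and 0 < k ≤ n. (a) For every a ∈ [0,1]^n: 0 ≤ C(n,k)^{−1} p_k^n(1−a_1,…,1−a_n) ≤ (−1)^k H_k^n(a) ≤ p_k^n(1−a_1,…,1−a_n). (b) For all s, t ∈ [0,∞)^n: 0 ≤ p_k^n(s_1 t_1,…,s_n t_n) ≤ p_k^n(s) p_k^n(t). -/
open MeasureTheory

attribute [local instance] Classical.propDecidable

namespace IndepRBF

/-- A discrete signed measure built from a coefficient function supported in `s`. -/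
noncomputable def dmOfFun {α : Type*} (s : Finset α) (c : α → ℝ) : α →₀ ℝ :=
  Finsupp.onFinset s (fun x => if x ∈ s then c x else 0)
    (fun x hx => by by_contra h; simp [h] at hx)

/-- Integral of a function against a discrete signed measure. -/
noncomputable def dmInt {α : Type*} (μ : α →₀ ℝ) (f : α → ℝ) : ℝ :=
  ∑ x ∈ μ.support, μ x * f x

/-- Measure of a set under a discrete signed measure. -/
noncomputable def dmMeas {α : Type*} (μ : α →₀ ℝ) (A : Set α) : ℝ :=
  ∑ x ∈ μ.support, if x ∈ A then μ x else 0

/-- Total mass of a discrete signed measure. -/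
noncomputable def dmTotal {α : Type*} (μ : α →₀ ℝ) : ℝ :=
  ∑ x ∈ μ.support, μ x

/-- A discrete probability measure. -/
def IsDiscProb {α : Type*} (P : α →₀ ℝ) : Prop :=
  (∀ x, 0 ≤ P x) ∧ dmTotal P = 1

/-- Membership in `M_k(X)`: the measure of every product set with at least `n-k+1` full
factors vanishes. -/
def memMk {n : ℕ} {X : Fin n → Type*} (k : ℕ) (μ : (∀ i, X i) →₀ ℝ) : Prop :=
  ∀ A : ∀ i, Set (X i),
    n - k + 1 ≤ (Finset.univ.filter fun i => A i = (Set.univ : Set (X i))).card →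
    dmMeas μ {x | ∀ i, x i ∈ A i} = 0

/-- Product of discrete signed measures. -/
noncomputable def dmPi {n : ℕ} {X : Fin n → Type*} (μ : ∀ i, X i →₀ ℝ) :
    (∀ i, X i) →₀ ℝ :=
  dmOfFun (Fintype.piFinset fun i => (μ i).support) (fun x => ∏ i, μ i (x i))

/-- Coefficient (at the `F`-coordinates of `x`) of the marginal of `P` on the block `F`. -/
noncomputable def margCoef {n : ℕ} {X : Fin n → Type*} (P : (∀ i, X i) →₀ ℝ)
    (F : Finset (Fin n)) (x : ∀ i, X i) : ℝ :=
  ∑ y ∈ P.support, if ∀ i ∈ F, y i = x i then P y else 0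

/-- A finite box containing the support of any product of marginals of `P`. -/
noncomputable def suppBox {n : ℕ} {X : Fin n → Type*} (P : (∀ i, X i) →₀ ℝ) :
    Finset (∀ i, X i) :=
  Fintype.piFinset fun i => P.support.image fun y => y i

/-- The one-dimensional marginal of `P` on coordinate `i`. -/
noncomputable def marg1 {n : ℕ} {X : Fin n → Type*} (P : (∀ i, X i) →₀ ℝ) (i : Fin n) :
    X i →₀ ℝ :=
  dmOfFun (P.support.image fun y => y i)
    (fun a => ∑ y ∈ P.support, if y i = a then P y else 0)

/-- The product of the one-dimensional marginals `P_1 × ⋯ × P_n`. -/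
noncomputable def prodMarg1 {n : ℕ} {X : Fin n → Type*} (P : (∀ i, X i) →₀ ℝ) :
    (∀ i, X i) →₀ ℝ :=
  dmPi fun i => marg1 P i

/-- The product measure `P_F × Q_{F^c}`, arranged on the coordinates of the product space. -/
noncomputable def pairTerm {n : ℕ} {X : Fin n → Type*} (P Q : (∀ i, X i) →₀ ℝ)
    (F : Finset (Fin n)) : (∀ i, X i) →₀ ℝ :=
  dmOfFun (Fintype.piFinset fun i =>
      (P.support.image fun y => y i) ∪ (Q.support.image fun y => y i))
    (fun x => margCoef P F x * margCoef Q Fᶜ x)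

/-- Generalized Lancaster interaction `Λ_k^n[P,Q]`. -/
noncomputable def genLanc {n : ℕ} {X : Fin n → Type*} (k : ℕ) (P Q : (∀ i, X i) →₀ ℝ) :
    (∀ i, X i) →₀ ℝ :=
  P + ∑ j ∈ Finset.range k,
    ((-1 : ℝ) ^ (k - j) * ((n - j - 1).choose (n - k) : ℝ)) •
      ∑ F ∈ Finset.powersetCard j (Finset.univ : Finset (Fin n)), pairTerm P Q F

/-- The measure `P_F × ∏_{j ∈ F^c} P_j` arranged on the coordinates of the product space. -/
noncomputable def lancTermD {n : ℕ} {X : Fin n → Type*} (P : (∀ i, X i) →₀ ℝ)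
    (F : Finset (Fin n)) : (∀ i, X i) →₀ ℝ :=
  dmOfFun (suppBox P) (fun x => margCoef P F x * ∏ j ∈ Fᶜ, margCoef P {j} x)

/-- Generalized Lancaster interaction `Λ_k^n[P] = P + Σ_j (−1)^{k−j} C(n−j−1,n−k)
Σ_{|F|=j} P_F × ∏_{i∈F^c} P_i`. -/
noncomputable def genLancD {n : ℕ} {X : Fin n → Type*} (k : ℕ) (P : (∀ i, X i) →₀ ℝ) :
    (∀ i, X i) →₀ ℝ :=
  P + ∑ j ∈ Finset.range k,
    ((-1 : ℝ) ^ (k - j) * ((n - j - 1).choose (n - k) : ℝ)) •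
      ∑ F ∈ Finset.powersetCard j (Finset.univ : Finset (Fin n)), lancTermD P F

/-- Lancaster interaction `Λ[P] = Σ_F (−1)^{n−|F|} P_F × ∏_{j∈F^c} P_j`. -/
noncomputable def lancaster {n : ℕ} {X : Fin n → Type*} (P : (∀ i, X i) →₀ ℝ) :
    (∀ i, X i) →₀ ℝ :=
  ∑ F ∈ (Finset.univ : Finset (Fin n)).powerset,
    ((-1 : ℝ) ^ (n - F.card)) • lancTermD P F

/-- `π` is a partition of `{1,…,n}`. -/
def IsPartition {n : ℕ} (π : Finset (Finset (Fin n))) : Prop :=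
  (∀ B ∈ π, B.Nonempty) ∧ (∀ B ∈ π, ∀ B' ∈ π, B ≠ B' → Disjoint B B') ∧
    ∀ i : Fin n, ∃ B ∈ π, i ∈ B

/-- The product of the marginals of `P` on the blocks of `π`, arranged on the coordinates of
the product space. -/
noncomputable def blockProd {n : ℕ} {X : Fin n → Type*} (P : (∀ i, X i) →₀ ℝ)
    (π : Finset (Finset (Fin n))) : (∀ i, X i) →₀ ℝ :=
  dmOfFun (suppBox P) (fun x => ∏ B ∈ π, margCoef P B x)

/-- Streitberg interaction `Σ[P]`. -/
noncomputable def streitberg {n : ℕ} {X : Fin n → Type*} (P : (∀ i, X i) →₀ ℝ) :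
    (∀ i, X i) →₀ ℝ :=
  ∑ π ∈ Finset.univ.filter (fun π : Finset (Finset (Fin n)) => IsPartition π),
    ((-1 : ℝ) ^ (π.card - 1) * ((π.card - 1).factorial : ℝ)) • blockProd P π

/-- The vector of squared distances `(‖u_1−v_1‖²,…,‖u_n−v_n‖²)`. -/
noncomputable def sqDistVec {n d : ℕ} (u v : Fin n → EuclideanSpace ℝ (Fin d)) :
    Fin n → ℝ :=
  fun i => ‖u i - v i‖ ^ 2

/-- Double integral `∬ g(‖u_1−v_1‖²,…,‖u_n−v_n‖²) dμ(u) dμ(v)`. -/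
noncomputable def dblInt {n d : ℕ} (μ : (Fin n → EuclideanSpace ℝ (Fin d)) →₀ ℝ)
    (g : (Fin n → ℝ) → ℝ) : ℝ :=
  dmInt μ fun u => dmInt μ fun v => g (sqDistVec u v)

/-- `g` is positive definite independent of order `k` in all Euclidean spaces. -/
def PDI (n k : ℕ) (g : (Fin n → ℝ) → ℝ) : Prop :=
  ∀ d : ℕ, ∀ μ : (Fin n → EuclideanSpace ℝ (Fin d)) →₀ ℝ,
    memMk k μ → 0 ≤ (-1 : ℝ) ^ k * dblInt μ g

/-- `g` is strictly positive definite independent of order `k` in all Euclidean spaces. -/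
def SPDI (n k : ℕ) (g : (Fin n → ℝ) → ℝ) : Prop :=
  PDI n k g ∧ ∀ d : ℕ, ∀ μ : (Fin n → EuclideanSpace ℝ (Fin d)) →₀ ℝ,
    memMk k μ → dblInt μ g = 0 → μ = 0

/-- The closed nonnegative orthant `[0,∞)^n`. -/
def Qset (n : ℕ) : Set (Fin n → ℝ) := {t | ∀ i, 0 ≤ t i}

/-- The open positive orthant `(0,∞)^n`. -/
def posOrth (n : ℕ) : Set (Fin n → ℝ) := {t | ∀ i, 0 < t i}

/-- The number of strictly positive coordinates of `t`. -/
noncomputable def posCount {n : ℕ} (t : Fin n → ℝ) : ℕ :=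
  (Finset.univ.filter fun i => 0 < t i).card

/-- Partial derivative in the `i`-th coordinate. -/
noncomputable def pd {n : ℕ} (i : Fin n) (h : (Fin n → ℝ) → ℝ) : (Fin n → ℝ) → ℝ :=
  fun t => deriv (fun s => h (Function.update t i s)) (t i)

/-- Iterated partial derivative `∂^α`. -/
noncomputable def pdMulti {n : ℕ} (α : Fin n → ℕ) (h : (Fin n → ℝ) → ℝ) :
    (Fin n → ℝ) → ℝ :=
  (List.finRange n).foldr (fun i k => (pd i)^[α i] k) h

/-- `h` is completely monotone in `n` variables on `(0,∞)^n`. -/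
def CompMonoOn (n : ℕ) (h : (Fin n → ℝ) → ℝ) : Prop :=
  ContDiffOn ℝ (⊤ : ℕ∞) h (posOrth n) ∧
    ∀ α : Fin n → ℕ, ∀ t ∈ posOrth n,
      0 ≤ (-1 : ℝ) ^ (∑ i, α i) * pdMulti α h t

/-- `g` is a Bernstein function of order `k` in `(0,∞)^n`. -/
def BernsteinOrder (n k : ℕ) (g : (Fin n → ℝ) → ℝ) : Prop :=
  ContDiffOn ℝ (⊤ : ℕ∞) g (posOrth n) ∧
    ∀ F : Finset (Fin n), F.card = k →
      CompMonoOn n (pdMulti (fun i => if i ∈ F then 1 else 0) g)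

/-- Elementary symmetric polynomial `p_k^n`. -/
noncomputable def esymm {n : ℕ} (k : ℕ) (r : Fin n → ℝ) : ℝ :=
  ∑ F ∈ Finset.powersetCard k (Finset.univ : Finset (Fin n)), ∏ i ∈ F, r i

/-- `H_k^n(r) = p_n^n(r) + Σ_{j<k} (−1)^{k−j} C(n−j−1,n−k) p_j^n(r)`. -/
noncomputable def Hkn {n : ℕ} (k : ℕ) (r : Fin n → ℝ) : ℝ :=
  esymm n r + ∑ j ∈ Finset.range k,
    (-1 : ℝ) ^ (k - j) * ((n - j - 1).choose (n - k) : ℝ) * esymm j r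

/-- `E_k^n(s) = H_k^n(e^{−s_1},…,e^{−s_n})`. -/
noncomputable def Ekn {n : ℕ} (k : ℕ) (s : Fin n → ℝ) : ℝ :=
  Hkn k fun i => Real.exp (-(s i))

/-- `φ(r,t) = (1−e^{−rt})(1+r)/r` for `r > 0`, and `φ(0,t) = t`. -/
noncomputable def phi (r t : ℝ) : ℝ :=
  if r = 0 then t else (1 - Real.exp (-(r * t))) * (1 + r) / r

/-- The vector `t_F ∈ [0,∞)^k` of the coordinates of `t` indexed by `F` (in increasing
order of indices); junk values if `F.card ≠ k`. -/
noncomputable def restrF {n : ℕ} (k : ℕ) (F : Finset (Fin n)) (t : Fin n → ℝ) :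
    Fin k → ℝ :=
  fun j => ((F.sort (· ≤ ·)).map t).getD j.val 0

/-- The integral representation of Bernstein functions of order `n` in `n` variables. -/
def RepN (n : ℕ) (g : (Fin n → ℝ) → ℝ) (η : Measure (Fin n → ℝ)) : Prop :=
  IsFiniteMeasure η ∧ η {r | ¬ ∀ i, 0 ≤ r i} = 0 ∧
    ∀ t ∈ Qset n, g t = ∫ r, ∏ i, phi (r i) (t i) ∂η

/-- The integral representation of Bernstein functions of order `k` in `n` variables. -/
def RepK (n k : ℕ) (g : (Fin n → ℝ) → ℝ)
    (ψ : Finset (Fin n) → (Fin k → ℝ) → ℝ) (η : Measure (Fin n → ℝ)) : Prop :=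
  (∀ F : Finset (Fin n), F.card = k →
      ContinuousOn (ψ F) (Qset k) ∧ BernsteinOrder k k (ψ F) ∧
        ∀ u ∈ Qset k, posCount u < k → ψ F u = 0) ∧
  IsFiniteMeasure η ∧
  η {r | ¬ ((∀ i, 0 ≤ r i) ∧ k < posCount r)} = 0 ∧
  ∀ t ∈ Qset n,
    g t = (∑ F ∈ Finset.powersetCard k (Finset.univ : Finset (Fin n)),
        ψ F (restrF k F t)) +
      ∫ r, (-1 : ℝ) ^ k * Ekn k (fun i => r i * t i) *
        esymm k (fun i => 1 + r i) / esymm k r ∂η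

/-! ### Auxiliary lemmas for `statement12` -/

section Statement12Aux

open Finset

/-- Expansion of an elementary symmetric polynomial in the "exact event" basis,
for a partition of unity `x i + y i = 1`. -/
private lemma esymm_expand_aux {n : ℕ} (j : ℕ) (x y : Fin n → ℝ) (h : ∀ i, x i + y i = 1) :
    esymm j x = ∑ T ∈ (Finset.univ : Finset (Fin n)).powerset,
      (T.card.choose j : ℝ) * ((∏ i ∈ T, x i) * ∏ i ∈ Tᶜ, y i) := by
  classical
  unfold esymm
  calc ∑ F ∈ Finset.powersetCard j Finset.univ, ∏ i ∈ F, x i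
      = ∑ F ∈ Finset.powersetCard j Finset.univ,
          (∏ i ∈ F, x i) * ∏ i ∈ Fᶜ, (x i + y i) := by
        apply Finset.sum_congr rfl; intro F _
        rw [Finset.prod_congr rfl (fun i _ => h i), Finset.prod_const_one, mul_one]
    _ = ∑ F ∈ Finset.powersetCard j Finset.univ, ∑ S ∈ Fᶜ.powerset,
          (∏ i ∈ F, x i) * ((∏ i ∈ S, x i) * ∏ i ∈ Fᶜ \ S, y i) := by
        apply Finset.sum_congr rfl; intro F _
        rw [Finset.prod_add, Finset.mul_sum]
    _ = ∑ T ∈ (Finset.univ : Finset (Fin n)).powerset,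
          ∑ F ∈ Finset.powersetCard j T, (∏ i ∈ T, x i) * ∏ i ∈ Tᶜ, y i := by
        rw [Finset.sum_sigma', Finset.sum_sigma']
        refine Finset.sum_nbij' (fun p => ⟨p.1 ∪ p.2, p.1⟩) (fun p => ⟨p.2, p.1 \ p.2⟩)
          ?_ ?_ ?_ ?_ ?_
        · rintro ⟨F, S⟩ hp
          simp only [Finset.mem_sigma, Finset.mem_powersetCard, Finset.mem_powerset] at hp ⊢
          exact ⟨Finset.subset_univ _, Finset.subset_union_left, hp.1.2⟩
        · rintro ⟨T, F⟩ hp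
          simp only [Finset.mem_sigma, Finset.mem_powersetCard, Finset.mem_powerset] at hp ⊢
          refine ⟨⟨Finset.subset_univ _, hp.2.2⟩, ?_⟩
          intro i hi
          simp only [Finset.mem_sdiff] at hi
          simp [Finset.mem_compl, hi.2]
        · rintro ⟨F, S⟩ hp
          simp only [Finset.mem_sigma, Finset.mem_powersetCard, Finset.mem_powerset] at hp
          have hd : Disjoint F S := by
            rw [Finset.disjoint_left]; intro i hiF hiS
            exact (Finset.mem_compl.mp (hp.2 hiS)) hiF
          simp [Finset.union_sdiff_cancel_left hd]
        · rintro ⟨T, F⟩ hp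
          simp only [Finset.mem_sigma, Finset.mem_powersetCard, Finset.mem_powerset] at hp
          simp [Finset.union_sdiff_of_subset hp.2.1]
        · rintro ⟨F, S⟩ hp
          simp only [Finset.mem_sigma, Finset.mem_powersetCard, Finset.mem_powerset] at hp
          have hd : Disjoint F S := by
            rw [Finset.disjoint_left]; intro i hiF hiS
            exact (Finset.mem_compl.mp (hp.2 hiS)) hiF
          have h1 : Fᶜ \ S = (F ∪ S)ᶜ := by
            rw [Finset.compl_union, Finset.inter_comm]
            ext i
            simp only [Finset.mem_sdiff, Finset.mem_inter, Finset.mem_compl]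
            tauto
          rw [← mul_assoc, ← Finset.prod_union hd, h1]
    _ = _ := by
        apply Finset.sum_congr rfl; intro T _
        rw [Finset.sum_const, Finset.card_powersetCard, nsmul_eq_mul]

/-- The complementary version: expansion of `esymm j y`. -/
private lemma esymm_expand_aux' {n : ℕ} (j : ℕ) (x y : Fin n → ℝ) (h : ∀ i, x i + y i = 1) :
    esymm j y = ∑ T ∈ (Finset.univ : Finset (Fin n)).powerset,
      ((n - T.card).choose j : ℝ) * ((∏ i ∈ T, x i) * ∏ i ∈ Tᶜ, y i) := by
  classical
  rw [esymm_expand_aux j y x (fun i => by rw [add_comm]; exact h i)]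
  refine Finset.sum_nbij' (fun T => Tᶜ) (fun T => Tᶜ) ?_ ?_ ?_ ?_ ?_
  · intro T _; exact Finset.mem_powerset.mpr (Finset.subset_univ _)
  · intro T _; exact Finset.mem_powerset.mpr (Finset.subset_univ _)
  · intro T _; exact compl_compl T
  · intro T _; exact compl_compl T
  · intro T _
    have hcard : n - Tᶜ.card = T.card := by
      rw [Finset.card_compl, Fintype.card_fin]
      have := T.card_le_univ
      rw [Fintype.card_fin] at this
      omega
    rw [hcard, compl_compl]
    ring

/-- RHS coefficient of the key binomial identity. -/
private noncomputable def RvAux (k m : ℕ) : ℝ :=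
  (-1:ℝ)^k * (if k ≤ m then ((m-1).choose (k-1) : ℝ) else 0) - (if m = 0 then 1 else 0)

private lemma RvAux_rec {k m : ℕ} (hk : 1 ≤ k) :
    RvAux (k+1) m = RvAux (k+1) (m+1) + RvAux k m := by
  unfold RvAux
  rcases Nat.eq_zero_or_pos m with hm | hm
  · subst hm
    have h1 : ¬ (k + 1 ≤ 0) := by omega
    have h2 : ¬ (k + 1 ≤ 1) := by omega
    have h3 : ¬ (k ≤ 0) := by omega
    simp [h1, h2, h3]
  · have hm0 : ¬ (m = 0) := by omega
    have hm1 : ¬ (m + 1 = 0) := by omega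
    simp only [hm0, hm1, if_false, sub_zero]
    rcases lt_trichotomy m k with h | h | h
    · have h1 : ¬ (k + 1 ≤ m) := by omega
      have h2 : ¬ (k + 1 ≤ m + 1) := by omega
      have h3 : ¬ (k ≤ m) := by omega
      simp [h1, h2, h3]
    · subst h
      have h1 : ¬ (m + 1 ≤ m) := by omega
      have h2 : m + 1 ≤ m + 1 := le_refl _
      have h3 : m ≤ m := le_refl _
      simp only [h1, h2, h3, if_false, if_true]
      rw [show m + 1 - 1 = m from rfl, Nat.choose_self,
        Nat.choose_self]
      push_cast
      ring
    · have h1 : k + 1 ≤ m := h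
      have h2 : k + 1 ≤ m + 1 := by omega
      have h3 : k ≤ m := by omega
      simp only [h1, h2, h3, if_true]
      have hp : m.choose k = (m-1).choose (k-1) + (m-1).choose k := by
        have hm' : m = (m - 1) + 1 := by omega
        have hk' : k = (k - 1) + 1 := by omega
        rw [hm', hk', Nat.choose_succ_succ]
        simp
      rw [show m + 1 - 1 = m from rfl, show k + 1 - 1 = k from rfl, hp]
      push_cast
      ring

/-- The key alternating binomial identity. -/
private lemma numid_aux : ∀ k, 1 ≤ k → ∀ n, k ≤ n → ∀ m, m ≤ n →
    (∑ j ∈ Finset.range k,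
      (-1:ℝ)^(k-j) * ((n-j-1).choose (n-k) : ℝ) * ((n-m).choose j : ℝ)) = RvAux k m := by
  intro k hk
  induction k, hk using Nat.le_induction with
  | base =>
    intro n hn m hm
    simp only [Finset.sum_range_one, Nat.sub_zero, pow_one, Nat.choose_zero_right,
      Nat.choose_self, Nat.cast_one, mul_one, RvAux]
    rcases Nat.eq_zero_or_pos m with hm0 | hm0
    · simp [hm0]
    · have h1 : 1 ≤ m := hm0
      have h2 : ¬ (m = 0) := by omega
      simp [h1, h2]
  | succ k hk IH =>
    intro n hn m hm
    obtain ⟨d, hd⟩ : ∃ d, m + d = n := ⟨n - m, by omega⟩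
    clear hm
    induction d generalizing m with
    | zero =>
      have hmn : m = n := by omega
      subst hmn
      have hsum : ∀ j ∈ Finset.range (k+1),
          (-1:ℝ)^(k+1-j) * ((m-j-1).choose (m-(k+1)) : ℝ) * ((m-m).choose j : ℝ)
          = if j = 0 then (-1:ℝ)^(k+1) * ((m-1).choose (m-(k+1)) : ℝ) else 0 := by
        intro j hj
        rcases Nat.eq_zero_or_pos j with hj0 | hj0
        · simp [hj0]
        · have h0 : (m-m).choose j = 0 := by
            rw [Nat.sub_self]
            exact Nat.choose_eq_zero_of_lt hj0
          have hj' : j ≠ 0 := by omega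
          rw [Nat.sub_self] at h0
          simp [h0, hj']
      rw [Finset.sum_congr rfl hsum, Finset.sum_ite_eq' (Finset.range (k+1)) 0]
      have h0 : (0:ℕ) ∈ Finset.range (k+1) := by simp
      rw [if_pos h0]
      unfold RvAux
      have hkm : k + 1 ≤ m := hn
      have hm0 : ¬ (m = 0) := by omega
      have hsymm : (m-1).choose (m-(k+1)) = (m-1).choose k := by
        have : m - (k+1) = (m-1) - k := by omega
        rw [this, Nat.choose_symm (by omega)]
      rw [hsymm]
      simp [hkm, hm0]
    | succ d IHd =>
      have hm1 : (m+1) + d = n := by omega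
      have hstep := IHd (m+1) hm1
      have hmn : m < n := by omega
      have hdiff : (∑ j ∈ Finset.range (k+1),
            (-1:ℝ)^(k+1-j) * ((n-j-1).choose (n-(k+1)) : ℝ) * ((n-m).choose j : ℝ))
          - (∑ j ∈ Finset.range (k+1),
            (-1:ℝ)^(k+1-j) * ((n-j-1).choose (n-(k+1)) : ℝ) * ((n-(m+1)).choose j : ℝ))
          = ∑ j ∈ Finset.range k,
            (-1:ℝ)^(k-j) * (((n-1)-j-1).choose ((n-1)-k) : ℝ) * (((n-1)-m).choose j : ℝ) := by
        rw [← Finset.sum_sub_distrib]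
        have hterm : ∀ j,
            (-1:ℝ)^(k+1-j) * ((n-j-1).choose (n-(k+1)) : ℝ) * ((n-m).choose j : ℝ)
            - (-1:ℝ)^(k+1-j) * ((n-j-1).choose (n-(k+1)) : ℝ) * ((n-(m+1)).choose j : ℝ)
            = (-1:ℝ)^(k+1-j) * ((n-j-1).choose (n-(k+1)) : ℝ)
              * (((n-m).choose j : ℝ) - ((n-(m+1)).choose j : ℝ)) := by
          intro j; ring
        rw [Finset.sum_congr rfl (fun j _ => hterm j)]
        rw [Finset.sum_range_succ']
        have h0term : (-1:ℝ)^(k+1-0) * ((n-0-1).choose (n-(k+1)) : ℝ)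
            * (((n-m).choose 0 : ℝ) - ((n-(m+1)).choose 0 : ℝ)) = 0 := by
          simp
        rw [h0term, add_zero]
        apply Finset.sum_congr rfl
        intro j hj
        have hnm : n - m = (n - (m+1)) + 1 := by omega
        have hchoose : (n-m).choose (j+1) = (n-(m+1)).choose j + (n-(m+1)).choose (j+1) := by
          rw [hnm, Nat.choose_succ_succ]
        have e1 : k + 1 - (j+1) = k - j := by omega
        have e2 : n - (j+1) - 1 = (n-1) - j - 1 := by omega
        have e3 : n - (k+1) = (n-1) - k := by omega
        have e4 : n - (m+1) = (n-1) - m := by omega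
        rw [hchoose, e1, e2, e3, e4]
        push_cast
        ring
      have hIH := IH (n-1) (by omega) m (by omega)
      rw [sub_eq_iff_eq_add] at hdiff
      rw [hdiff, hstep, hIH]
      have := RvAux_rec (k := k) (m := m) hk
      linarith

/-- Expansion of `(-1)^k * Hkn k a` in the exact-event basis. -/
private lemma hkn_expand {n : ℕ} (k : ℕ) (hk : 1 ≤ k) (hkn : k ≤ n) (a : Fin n → ℝ) :
    (-1:ℝ)^k * Hkn k a = ∑ T ∈ (Finset.univ : Finset (Fin n)).powerset,
      (if k ≤ T.card then ((T.card - 1).choose (k-1) : ℝ) else 0) *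
        ((∏ i ∈ T, (1 - a i)) * ∏ i ∈ Tᶜ, a i) := by
  classical
  have hsum1 : ∀ i : Fin n, (1 - a i) + a i = 1 := fun i => by ring
  have hH : Hkn k a = ∑ T ∈ (Finset.univ : Finset (Fin n)).powerset,
      (((n - T.card).choose n : ℝ) + ∑ j ∈ Finset.range k,
        (-1:ℝ)^(k-j) * ((n-j-1).choose (n-k) : ℝ) * ((n - T.card).choose j : ℝ)) *
      ((∏ i ∈ T, (1 - a i)) * ∏ i ∈ Tᶜ, a i) := by
    unfold Hkn
    rw [esymm_expand_aux' n _ _ hsum1]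
    have hj : ∀ j ∈ Finset.range k,
        (-1:ℝ)^(k-j) * ((n-j-1).choose (n-k) : ℝ) * esymm j a
        = ∑ T ∈ (Finset.univ : Finset (Fin n)).powerset,
          (-1:ℝ)^(k-j) * ((n-j-1).choose (n-k) : ℝ) * ((n - T.card).choose j : ℝ)
            * ((∏ i ∈ T, (1 - a i)) * ∏ i ∈ Tᶜ, a i) := by
      intro j _
      rw [esymm_expand_aux' j _ _ hsum1, Finset.mul_sum]
      apply Finset.sum_congr rfl; intro T _; ring
    rw [Finset.sum_congr rfl hj, Finset.sum_comm, ← Finset.sum_add_distrib]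
    apply Finset.sum_congr rfl; intro T _
    rw [add_mul, Finset.sum_mul]
  rw [hH, Finset.mul_sum]
  apply Finset.sum_congr rfl; intro T hT
  have hTcard : T.card ≤ n := by
    have := T.card_le_univ
    rwa [Fintype.card_fin] at this
  rw [numid_aux k hk n hkn T.card hTcard]
  unfold RvAux
  have hch : ((n - T.card).choose n : ℝ) = if T.card = 0 then 1 else 0 := by
    rcases Nat.eq_zero_or_pos T.card with h0 | h0
    · simp [h0]
    · have : n - T.card < n := by omega
      rw [Nat.choose_eq_zero_of_lt this]
      simp [show T.card ≠ 0 from by omega]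
  rw [hch]
  have hs : (-1:ℝ)^k * (-1:ℝ)^k = 1 := by
    rw [← pow_add, Even.neg_one_pow ⟨k, rfl⟩]
  have hco : ∀ (c z : ℝ), z + ((-1:ℝ)^k * c - z) = (-1:ℝ)^k * c := by
    intro c z; ring
  rw [hco]
  have hfin : ∀ (c p : ℝ), (-1:ℝ)^k * ((-1:ℝ)^k * c * p) = c * p := by
    intro c p
    rw [show (-1:ℝ)^k * ((-1:ℝ)^k * c * p) = ((-1:ℝ)^k * (-1:ℝ)^k) * (c * p) from by ring,
      hs, one_mul]
  exact hfin _ _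

end Statement12Aux

/-- inequalities for elementary symmetric polynomials and `H_k^n`. -/
theorem statement12 {n : ℕ} (hn : 2 ≤ n) (k : ℕ) (hk : 0 < k) (hkn : k ≤ n) :
    (∀ a : Fin n → ℝ, (∀ i, a i ∈ Set.Icc (0 : ℝ) 1) →
      0 ≤ ((n.choose k : ℝ))⁻¹ * esymm k (fun i => 1 - a i) ∧
      ((n.choose k : ℝ))⁻¹ * esymm k (fun i => 1 - a i) ≤ (-1 : ℝ) ^ k * Hkn k a ∧
      (-1 : ℝ) ^ k * Hkn k a ≤ esymm k (fun i => 1 - a i)) ∧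
    (∀ s t : Fin n → ℝ, (∀ i, 0 ≤ s i) → (∀ i, 0 ≤ t i) →
      0 ≤ esymm k (fun i => s i * t i) ∧
      esymm k (fun i => s i * t i) ≤ esymm k s * esymm k t) := by
  classical
  have hk1 : 1 ≤ k := hk
  constructor
  · intro a ha
    have hsum1 : ∀ i : Fin n, (1 - a i) + a i = 1 := fun i => by ring
    have hE : esymm k (fun i => 1 - a i) = ∑ T ∈ (Finset.univ : Finset (Fin n)).powerset,
        (T.card.choose k : ℝ) * ((∏ i ∈ T, (1 - a i)) * ∏ i ∈ Tᶜ, a i) :=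
      esymm_expand_aux k _ _ hsum1
    have hG := hkn_expand k hk1 hkn a
    have hP : ∀ T : Finset (Fin n), 0 ≤ (∏ i ∈ T, (1 - a i)) * ∏ i ∈ Tᶜ, a i := by
      intro T
      apply mul_nonneg
      · exact Finset.prod_nonneg fun i _ => by have := (ha i).2; linarith
      · exact Finset.prod_nonneg fun i _ => (ha i).1
    have hCpos : (0:ℝ) < (n.choose k : ℝ) := by exact_mod_cast Nat.choose_pos hkn
    have hTn : ∀ T : Finset (Fin n), T.card ≤ n := by
      intro T
      have := T.card_le_univ
      rwa [Fintype.card_fin] at this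
    have hEnn : 0 ≤ esymm k (fun i => 1 - a i) := by
      rw [hE]
      apply Finset.sum_nonneg
      intro T _
      exact mul_nonneg (by positivity) (hP T)
    refine ⟨mul_nonneg (inv_nonneg.mpr hCpos.le) hEnn, ?_, ?_⟩
    · rw [hE, hG, Finset.mul_sum]
      apply Finset.sum_le_sum
      intro T _
      rw [← mul_assoc]
      apply mul_le_mul_of_nonneg_right _ (hP T)
      by_cases hkT : k ≤ T.card
      · rw [if_pos hkT]
        have h1 : (T.card.choose k : ℝ) ≤ (n.choose k : ℝ) := by
          exact_mod_cast Nat.choose_le_choose k (hTn T)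
        have h2 : (1:ℝ) ≤ ((T.card - 1).choose (k-1) : ℝ) := by
          exact_mod_cast Nat.succ_le_of_lt (Nat.choose_pos (by omega))
        calc ((n.choose k : ℝ))⁻¹ * (T.card.choose k : ℝ)
            ≤ ((n.choose k : ℝ))⁻¹ * (n.choose k : ℝ) :=
              mul_le_mul_of_nonneg_left h1 (inv_nonneg.mpr hCpos.le)
          _ = 1 := inv_mul_cancel₀ hCpos.ne'
          _ ≤ _ := h2
      · rw [if_neg hkT, Nat.choose_eq_zero_of_lt (show T.card < k by omega)]
        simp
    · rw [hE, hG]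
      apply Finset.sum_le_sum
      intro T _
      apply mul_le_mul_of_nonneg_right _ (hP T)
      by_cases hkT : k ≤ T.card
      · rw [if_pos hkT]
        have hps : T.card.choose k = (T.card - 1).choose (k-1) + (T.card - 1).choose k := by
          have hm' : T.card = (T.card - 1) + 1 := by omega
          have hk' : k = (k - 1) + 1 := by omega
          rw [hm', hk', Nat.choose_succ_succ]
          congr 1
        rw [hps]
        push_cast
        have : (0:ℝ) ≤ ((T.card - 1).choose k : ℝ) := by positivity
        linarith
      · rw [if_neg hkT]
        positivity
  · intro s t hs ht
    constructor
    · unfold esymm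
      apply Finset.sum_nonneg; intro F _
      exact Finset.prod_nonneg fun i _ => mul_nonneg (hs i) (ht i)
    · unfold esymm
      have hstep : ∀ F ∈ Finset.powersetCard k (Finset.univ : Finset (Fin n)),
          ∏ i ∈ F, (s i * t i) ≤ (∏ i ∈ F, s i) *
            ∑ G ∈ Finset.powersetCard k (Finset.univ : Finset (Fin n)), ∏ i ∈ G, t i := by
        intro F hF
        rw [Finset.prod_mul_distrib]
        apply mul_le_mul_of_nonneg_left _ (Finset.prod_nonneg fun i _ => hs i)
        exact Finset.single_le_sum (f := fun G => ∏ i ∈ G, t i)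
          (fun G _ => Finset.prod_nonneg fun i _ => ht i) hF
      calc ∑ F ∈ Finset.powersetCard k (Finset.univ : Finset (Fin n)), ∏ i ∈ F, (s i * t i)
          ≤ ∑ F ∈ Finset.powersetCard k (Finset.univ : Finset (Fin n)), ((∏ i ∈ F, s i) *
            ∑ G ∈ Finset.powersetCard k (Finset.univ : Finset (Fin n)), ∏ i ∈ G, t i) :=
            Finset.sum_le_sum hstep
        _ = _ := by rw [← Finset.sum_mul]

end IndepRBF
end

section
/- Let 0 < k ≤ n. (a) For every F ⊆ {1,…,n} with |F| = k and every r ∈ [0,∞)^n: (Σ_{j=0}^{k} p_j^n(r)) · ∏_{i∈F} r_i ≤ p_k^n(r) · ∏_{i∈F} (1+r_i). (b) For every r ∈ [0,∞)^n: p_k^n(r_1/(1+r_1),…,r_n/(1+r_n)) · p_k^n(1+r_1,…,1+r_n) ≤ C(n,k)² p_k^n(r). -/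
open MeasureTheory

attribute [local instance] Classical.propDecidable

namespace IndepRBF

lemma sum_esymm_eq {n : ℕ} (k : ℕ) (r : Fin n → ℝ) :
    ∑ j ∈ Finset.range (k + 1), esymm j r
      = ∑ G ∈ (Finset.univ : Finset (Fin n)).powerset.filter (fun G => G.card ≤ k),
          ∏ i ∈ G, r i := by
  classical
  have hset : (Finset.univ : Finset (Fin n)).powerset.filter (fun G => G.card ≤ k)
      = (Finset.range (k + 1)).biUnion
          (fun j => Finset.powersetCard j (Finset.univ : Finset (Fin n))) := by
    ext G
    simp [Finset.mem_powersetCard, Nat.lt_succ_iff]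
  rw [hset, Finset.sum_biUnion]
  · rfl
  · intro j₁ _ j₂ _ hne
    apply Finset.disjoint_left.2
    intro G h1 h2
    rw [Finset.mem_powersetCard] at h1 h2
    exact hne (h1.2 ▸ h2.2 ▸ rfl)

lemma esymm_nonneg {n : ℕ} (k : ℕ) {r : Fin n → ℝ} (hr : ∀ i, 0 ≤ r i) :
    0 ≤ esymm k r :=
  Finset.sum_nonneg fun G _ => Finset.prod_nonneg fun i _ => hr i

set_option maxHeartbeats 1000000 in
lemma parta {n : ℕ} (k : ℕ) (hkn : k ≤ n) (F : Finset (Fin n)) (hF : F.card = k)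
    (r : Fin n → ℝ) (hr : ∀ i, 0 ≤ r i) :
    (∑ j ∈ Finset.range (k + 1), esymm j r) * ∏ i ∈ F, r i ≤
      esymm k r * ∏ i ∈ F, (1 + r i) := by
  classical
  -- choice of complement subset
  have hch : ∀ G : Finset (Fin n), ∃ C, C ⊆ F \ G ∧ (G.card ≤ k → C.card = k - G.card) := by
    intro G
    by_cases h : G.card ≤ k
    · have h1 : (F ∩ G).card ≤ G.card := Finset.card_le_card Finset.inter_subset_right
      have h2 : (F \ G).card + (F ∩ G).card = F.card := Finset.card_sdiff_add_card_inter F G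
      have hle : k - G.card ≤ (F \ G).card := by omega
      obtain ⟨C, hC1, hC2⟩ := Finset.exists_subset_card_eq hle
      exact ⟨C, hC1, fun _ => hC2⟩
    · exact ⟨∅, Finset.empty_subset _, fun h' => absurd h' h⟩
  choose ch hsub hcard using hch
  set T := (Finset.univ : Finset (Fin n)).powerset.filter (fun G => G.card ≤ k) with hT
  have hprodF : ∏ i ∈ F, (1 + r i) = ∑ S ∈ F.powerset, ∏ i ∈ S, r i := by
    simp_rw [add_comm (1 : ℝ)]
    rw [Finset.prod_add]
    simp
  rw [sum_esymm_eq, hprodF, esymm, Finset.sum_mul, Finset.sum_mul_sum,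
    ← Finset.sum_product']
  set f : Finset (Fin n) → Finset (Fin n) × Finset (Fin n) :=
    fun G => (G ∪ ch G, F \ ch G) with hf
  have hdisj : ∀ G : Finset (Fin n), Disjoint G (ch G) := fun G =>
    Disjoint.symm (Disjoint.mono_left (hsub G) Finset.sdiff_disjoint)
  have hterm : ∀ G ∈ T, (∏ i ∈ G, r i) * ∏ i ∈ F, r i
      = (∏ i ∈ (f G).1, r i) * ∏ i ∈ (f G).2, r i := by
    intro G _
    have h1 : ∏ i ∈ G ∪ ch G, r i = (∏ i ∈ G, r i) * ∏ i ∈ ch G, r i :=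
      Finset.prod_union (hdisj G)
    have h2 : (∏ i ∈ F \ ch G, r i) * ∏ i ∈ ch G, r i = ∏ i ∈ F, r i :=
      Finset.prod_sdiff ((hsub G).trans (Finset.sdiff_subset))
    simp only [hf]
    rw [h1, ← h2]
    ring
  have hinj : ∀ x ∈ T, ∀ y ∈ T, f x = f y → x = y := by
    intro x hx y hy hxy
    have hsubF : ∀ G : Finset (Fin n), ch G ⊆ F := fun G =>
      (hsub G).trans Finset.sdiff_subset
    have h2 : F \ ch x = F \ ch y := by simpa [hf] using congrArg Prod.snd hxy
    have hce : ch x = ch y := by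
      have := congrArg (fun s => F \ s) h2
      simpa [Finset.sdiff_sdiff_eq_self (hsubF x), Finset.sdiff_sdiff_eq_self (hsubF y)]
        using this
    have hdx : Disjoint x (ch y) := hce ▸ hdisj x
    have h1 : x ∪ ch y = y ∪ ch y := by
      have := congrArg Prod.fst hxy
      simp only [hf] at this
      rw [hce] at this
      exact this
    have := congrArg (fun s => s \ ch y) h1
    simpa [Finset.union_sdiff_cancel_right hdx,
      Finset.union_sdiff_cancel_right (hdisj y)] using this
  calc ∑ G ∈ T, (∏ i ∈ G, r i) * ∏ i ∈ F, r i
      = ∑ G ∈ T, (∏ i ∈ (f G).1, r i) * ∏ i ∈ (f G).2, r i :=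
        Finset.sum_congr rfl hterm
    _ = ∑ p ∈ T.image f, (∏ i ∈ p.1, r i) * ∏ i ∈ p.2, r i :=
        (Finset.sum_image (f := fun p : Finset (Fin n) × Finset (Fin n) =>
          (∏ i ∈ p.1, r i) * ∏ i ∈ p.2, r i) hinj).symm
    _ ≤ ∑ p ∈ (Finset.powersetCard k (Finset.univ : Finset (Fin n))) ×ˢ F.powerset,
          (∏ i ∈ p.1, r i) * ∏ i ∈ p.2, r i := by
        apply Finset.sum_le_sum_of_subset_of_nonneg
        · intro p hp
          obtain ⟨G, hG, rfl⟩ := Finset.mem_image.1 hp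
          rw [hT, Finset.mem_filter] at hG
          have hGk : G.card ≤ k := hG.2
          rw [Finset.mem_product]
          constructor
          · rw [Finset.mem_powersetCard]
            refine ⟨Finset.subset_univ _, ?_⟩
            rw [Finset.card_union_of_disjoint (hdisj G), hcard G hGk]
            omega
          · exact Finset.mem_powerset.2 Finset.sdiff_subset
        · intro p _ _
          exact mul_nonneg (Finset.prod_nonneg fun i _ => hr i)
            (Finset.prod_nonneg fun i _ => hr i)

lemma oneadd_le {n : ℕ} (k : ℕ) (H : Finset (Fin n)) (hH : H.card ≤ k)
    (r : Fin n → ℝ) (hr : ∀ i, 0 ≤ r i) :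
    ∏ i ∈ H, (1 + r i) ≤ ∑ j ∈ Finset.range (k + 1), esymm j r := by
  classical
  have hprodH : ∏ i ∈ H, (1 + r i) = ∑ S ∈ H.powerset, ∏ i ∈ S, r i := by
    simp_rw [add_comm (1 : ℝ)]
    rw [Finset.prod_add]
    simp
  rw [sum_esymm_eq, hprodH]
  apply Finset.sum_le_sum_of_subset_of_nonneg
  · intro S hS
    rw [Finset.mem_powerset] at hS
    rw [Finset.mem_filter]
    exact ⟨Finset.mem_powerset.2 (Finset.subset_univ _),
      le_trans (Finset.card_le_card hS) hH⟩
  · intro S _ _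
    exact Finset.prod_nonneg fun i _ => hr i

lemma partb {n : ℕ} (k : ℕ) (hkn : k ≤ n) (r : Fin n → ℝ) (hr : ∀ i, 0 ≤ r i) :
    esymm k (fun i => r i / (1 + r i)) * esymm k (fun i => 1 + r i) ≤
      (n.choose k : ℝ) ^ 2 * esymm k r := by
  classical
  set A := ∑ j ∈ Finset.range (k + 1), esymm j r with hA
  have hclaim : ∀ G ∈ Finset.powersetCard k (Finset.univ : Finset (Fin n)),
      ∀ H ∈ Finset.powersetCard k (Finset.univ : Finset (Fin n)),
      (∏ i ∈ G, r i / (1 + r i)) * ∏ i ∈ H, (1 + r i) ≤ esymm k r := by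
    intro G hG H hH
    rw [Finset.mem_powersetCard] at hG hH
    have hB : (0 : ℝ) < ∏ i ∈ G, (1 + r i) :=
      Finset.prod_pos fun i _ => by linarith [hr i]
    have hP : (0 : ℝ) ≤ ∏ i ∈ G, r i := Finset.prod_nonneg fun i _ => hr i
    have h1 : ∏ i ∈ H, (1 + r i) ≤ A := oneadd_le k H hH.2.le r hr
    have h2 : A * ∏ i ∈ G, r i ≤ esymm k r * ∏ i ∈ G, (1 + r i) :=
      parta k hkn G hG.2 r hr
    rw [Finset.prod_div_distrib]
    calc ((∏ i ∈ G, r i) / ∏ i ∈ G, (1 + r i)) * ∏ i ∈ H, (1 + r i)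
        ≤ ((∏ i ∈ G, r i) / ∏ i ∈ G, (1 + r i)) * A :=
          mul_le_mul_of_nonneg_left h1 (div_nonneg hP hB.le)
      _ = (A * ∏ i ∈ G, r i) / ∏ i ∈ G, (1 + r i) := by ring
      _ ≤ (esymm k r * ∏ i ∈ G, (1 + r i)) / ∏ i ∈ G, (1 + r i) := by
          apply div_le_div_of_nonneg_right h2 hB.le
      _ = esymm k r := mul_div_cancel_right₀ _ (ne_of_gt hB)
  have hcard : (Finset.powersetCard k (Finset.univ : Finset (Fin n))).card
      = n.choose k := by
    rw [Finset.card_powersetCard, Finset.card_univ, Fintype.card_fin]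
  calc esymm k (fun i => r i / (1 + r i)) * esymm k (fun i => 1 + r i)
      = ∑ G ∈ Finset.powersetCard k (Finset.univ : Finset (Fin n)),
          ∑ H ∈ Finset.powersetCard k (Finset.univ : Finset (Fin n)),
          (∏ i ∈ G, r i / (1 + r i)) * ∏ i ∈ H, (1 + r i) := by
        rw [esymm, esymm, Finset.sum_mul_sum]
    _ ≤ ∑ G ∈ Finset.powersetCard k (Finset.univ : Finset (Fin n)),
          ∑ H ∈ Finset.powersetCard k (Finset.univ : Finset (Fin n)),
          esymm k r := by
        apply Finset.sum_le_sum
        intro G hG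
        exact Finset.sum_le_sum fun H hH => hclaim G hG H hH
    _ = (n.choose k : ℝ) ^ 2 * esymm k r := by
        simp [Finset.sum_const, hcard]
        ring

/-- further inequalities for elementary symmetric polynomials. -/
theorem statement13 {n : ℕ} (k : ℕ) (hk : 0 < k) (hkn : k ≤ n) :
    (∀ F : Finset (Fin n), F.card = k → ∀ r : Fin n → ℝ, (∀ i, 0 ≤ r i) →
      (∑ j ∈ Finset.range (k + 1), esymm j r) * ∏ i ∈ F, r i ≤
        esymm k r * ∏ i ∈ F, (1 + r i)) ∧
    (∀ r : Fin n → ℝ, (∀ i, 0 ≤ r i) →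
      esymm k (fun i => r i / (1 + r i)) * esymm k (fun i => 1 + r i) ≤
        (n.choose k : ℝ) ^ 2 * esymm k r) := by
  exact ⟨fun F hF r hr => parta k hkn F hF r hr, fun r hr => partb k hkn r hr⟩

end IndepRBF
end

section
/- Let n > k ≥ 1 and let g : [0,∞)^n → ℝ be continuous, with g(t) = 0 for every t ∈ ∂_{k−1}^n, and PDI_{k,n}^∞. Then: (a) g is nonnegative; (b) g is increasing, i.e., g(t) ≤ g(t′) whenever t′ − t ∈ [0,∞)^n; (c) for every t ∈ [0,∞)^n, C(n,k)^{−1} Σ_{F ⊆ {1,…,n}, |F| = k} g(ι_F(t)) ≤ g(t) ≤ Σ_{F ⊆ {1,…,n}, |F| = k} g(ι_F(t)), where ι_F(t) ∈ [0,∞)^n has i-th coordinate t_i for i ∈ F and 0 otherwise. -/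
open MeasureTheory

attribute [local instance] Classical.propDecidable

namespace IndepRBF

/-! ### Infrastructure: integrals of indexed discrete measures -/

section Infra

variable {α : Type*} {ι : Type*} [Fintype ι]

lemma dmOfFun_support (s : Finset α) (c : α → ℝ) : (dmOfFun s c).support ⊆ s := by
  intro x hx
  have h := Finsupp.mem_support_iff.mp hx
  by_contra hxs
  exact h (by simp [dmOfFun, hxs])

/-- Discrete signed measure with atoms `pt a` and weights `w a`. -/
noncomputable def dmIdx (w : ι → ℝ) (pt : ι → α) : α →₀ ℝ :=
  dmOfFun (Finset.univ.image pt)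
    (fun x => ∑ a ∈ Finset.univ.filter (fun a => pt a = x), w a)

lemma dmIdx_apply (w : ι → ℝ) (pt : ι → α) (x : α) :
    dmIdx w pt x = if x ∈ Finset.univ.image pt then
      (∑ a ∈ Finset.univ.filter (fun a => pt a = x), w a) else 0 := by
  rfl

lemma dmInt_dmIdx (w : ι → ℝ) (pt : ι → α) (f : α → ℝ) :
    dmInt (dmIdx w pt) f = ∑ a : ι, w a * f (pt a) := by
  classical
  have hsub : (dmIdx w pt).support ⊆ Finset.univ.image pt := dmOfFun_support _ _
  have h1 : dmInt (dmIdx w pt) f = ∑ x ∈ Finset.univ.image pt, (dmIdx w pt) x * f x := by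
    refine Finset.sum_subset hsub ?_
    intro x _ hx
    rw [Finsupp.notMem_support_iff.mp hx, zero_mul]
  rw [h1]
  have h2 : ∀ x ∈ Finset.univ.image pt,
      (dmIdx w pt) x * f x
        = ∑ a ∈ Finset.univ.filter (fun a => pt a = x), w a * f (pt a) := by
    intro x hx
    rw [dmIdx_apply, if_pos hx, Finset.sum_mul]
    refine Finset.sum_congr rfl ?_
    intro a ha
    rw [(Finset.mem_filter.mp ha).2]
  rw [Finset.sum_congr rfl h2]
  exact Finset.sum_fiberwise_of_maps_to (fun a _ => Finset.mem_image_of_mem pt (Finset.mem_univ a)) _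

lemma dmMeas_dmIdx (w : ι → ℝ) (pt : ι → α) (A : Set α) :
    dmMeas (dmIdx w pt) A = ∑ a : ι, if pt a ∈ A then w a else 0 := by
  classical
  have hsub : (dmIdx w pt).support ⊆ Finset.univ.image pt := dmOfFun_support _ _
  have h1 : dmMeas (dmIdx w pt) A
      = ∑ x ∈ Finset.univ.image pt, (if x ∈ A then (dmIdx w pt) x else 0) := by
    refine Finset.sum_subset hsub ?_
    intro x _ hx
    rw [Finsupp.notMem_support_iff.mp hx]
    simp
  rw [h1]
  have h2 : ∀ x ∈ Finset.univ.image pt,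
      (if x ∈ A then (dmIdx w pt) x else 0)
        = ∑ a ∈ Finset.univ.filter (fun a => pt a = x), (if pt a ∈ A then w a else 0) := by
    intro x hx
    rw [dmIdx_apply, if_pos hx]
    by_cases hA : x ∈ A
    · rw [if_pos hA]
      refine Finset.sum_congr rfl ?_
      intro a ha
      rw [(Finset.mem_filter.mp ha).2, if_pos hA]
    · rw [if_neg hA]
      symm
      refine Finset.sum_eq_zero ?_
      intro a ha
      rw [(Finset.mem_filter.mp ha).2, if_neg hA]
  rw [Finset.sum_congr rfl h2]
  exact Finset.sum_fiberwise_of_maps_to (fun a _ => Finset.mem_image_of_mem pt (Finset.mem_univ a)) _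

lemma dblInt_dmIdx {n d : ℕ} (w : ι → ℝ) (pt : ι → (Fin n → EuclideanSpace ℝ (Fin d)))
    (g : (Fin n → ℝ) → ℝ) :
    dblInt (dmIdx w pt) g
      = ∑ a : ι, ∑ b : ι, w a * w b * g (sqDistVec (pt a) (pt b)) := by
  unfold dblInt
  rw [dmInt_dmIdx]
  refine Finset.sum_congr rfl ?_
  intro a _
  rw [dmInt_dmIdx, Finset.mul_sum]
  refine Finset.sum_congr rfl ?_
  intro b _
  ring

end Infra
/-! ### Distance computations in Euclidean space -/

section Dist

variable {d : ℕ}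

lemma normsq_two_single (o q q' : Fin d) (ho : o ≠ q) (ho' : o ≠ q')
    (α β α' β' : ℝ) :
    ‖(EuclideanSpace.single o α + EuclideanSpace.single q β)
      - (EuclideanSpace.single o α' + EuclideanSpace.single q' β')‖ ^ 2
      = (α - α') ^ 2 + (if q = q' then (β - β') ^ 2 else β ^ 2 + β' ^ 2) := by
  classical
  set x : EuclideanSpace ℝ (Fin d) :=
    (EuclideanSpace.single o α + EuclideanSpace.single q β)
      - (EuclideanSpace.single o α' + EuclideanSpace.single q' β') with hx
  have happ : ∀ i : Fin d, x i =
      ((if i = o then α else 0) + (if i = q then β else 0))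
        - ((if i = o then α' else 0) + (if i = q' then β' else 0)) := by
    intro i
    rw [hx]
    rw [PiLp.sub_apply, PiLp.add_apply, PiLp.add_apply]
    simp [EuclideanSpace.single_apply]
  have hnorm : ‖x‖ ^ 2 = ∑ i : Fin d, ‖x i‖ ^ 2 := by
    rw [EuclideanSpace.norm_eq]
    rw [Real.sq_sqrt]
    positivity
  rw [hnorm]
  by_cases hqq : q = q'
  · subst hqq
    have hpt : ∀ i : Fin d, ‖x i‖ ^ 2 =
        (if i = o then (α - α') ^ 2 else 0) + (if i = q then (β - β') ^ 2 else 0) := by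
      intro i
      rw [happ i, Real.norm_eq_abs, sq_abs]
      by_cases hio : i = o
      · subst hio
        simp [if_neg ho]
      · by_cases hiq : i = q
        · subst hiq
          simp [hio]
        · simp [hio, hiq]
    rw [Finset.sum_congr rfl (fun i _ => hpt i), Finset.sum_add_distrib,
      Finset.sum_ite_eq' Finset.univ o (fun _ => (α - α') ^ 2),
      Finset.sum_ite_eq' Finset.univ q (fun _ => (β - β') ^ 2)]
    simp
  · have hpt : ∀ i : Fin d, ‖x i‖ ^ 2 =
        (if i = o then (α - α') ^ 2 else 0) + ((if i = q then β ^ 2 else 0)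
          + (if i = q' then β' ^ 2 else 0)) := by
      intro i
      rw [happ i, Real.norm_eq_abs, sq_abs]
      by_cases hio : i = o
      · subst hio
        simp [if_neg ho, if_neg ho']
      · by_cases hiq : i = q
        · subst hiq
          simp [hio, hqq]
        · by_cases hiq' : i = q'
          · subst hiq'
            simp [hio, Ne.symm hqq]
          · simp [hio, hiq, hiq']
    rw [Finset.sum_congr rfl (fun i _ => hpt i), Finset.sum_add_distrib,
      Finset.sum_add_distrib,
      Finset.sum_ite_eq' Finset.univ o (fun _ => (α - α') ^ 2),
      Finset.sum_ite_eq' Finset.univ q (fun _ => β ^ 2),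
      Finset.sum_ite_eq' Finset.univ q' (fun _ => β' ^ 2)]
    simp [hqq]

end Dist
/-! ### The master measure construction -/

section MasterDefs

open scoped symmDiff

variable {n : ℕ}

/-- index flip used for the involution argument -/
noncomputable def flipS (i₀ : Fin n) (S : Finset (Fin n)) : Finset (Fin n) :=
  if i₀ ∈ S then S.erase i₀ else insert i₀ S

lemma flipS_flipS (i₀ : Fin n) (S : Finset (Fin n)) : flipS i₀ (flipS i₀ S) = S := by
  unfold flipS
  by_cases h : i₀ ∈ S
  · rw [if_pos h, if_neg (Finset.notMem_erase i₀ S), Finset.insert_erase h]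
  · rw [if_neg h, if_pos (Finset.mem_insert_self i₀ S), Finset.erase_insert h]

lemma flipS_ne (i₀ : Fin n) (S : Finset (Fin n)) : flipS i₀ S ≠ S := by
  unfold flipS
  by_cases h : i₀ ∈ S
  · rw [if_pos h]
    intro hEq
    exact (Finset.notMem_erase i₀ S) (hEq.symm ▸ h)
  · rw [if_neg h]
    intro hEq
    exact h (hEq ▸ Finset.mem_insert_self i₀ S)

lemma flipS_mem (i₀ : Fin n) (S : Finset (Fin n)) {i : Fin n} (hi : i ≠ i₀) :
    (i ∈ flipS i₀ S) ↔ i ∈ S := by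
  unfold flipS
  by_cases h : i₀ ∈ S
  · rw [if_pos h, Finset.mem_erase]
    exact ⟨fun h' => h'.2, fun h' => ⟨hi, h'⟩⟩
  · rw [if_neg h, Finset.mem_insert]
    exact ⟨fun h' => h'.resolve_left hi, fun h' => Or.inr h'⟩

lemma flipS_subset_iff {i₀ : Fin n} {K : Finset (Fin n)} (hi₀ : i₀ ∈ K)
    (S : Finset (Fin n)) : (flipS i₀ S ⊆ K) ↔ S ⊆ K := by
  unfold flipS
  by_cases h : i₀ ∈ S
  · rw [if_pos h]
    constructor
    · intro h' i hiS
      by_cases hii : i = i₀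
      · exact hii ▸ hi₀
      · exact h' (Finset.mem_erase.mpr ⟨hii, hiS⟩)
    · intro h'
      exact (Finset.erase_subset i₀ S).trans h'
  · rw [if_neg h]
    constructor
    · intro h'
      exact (Finset.subset_insert i₀ S).trans h'
    · intro h'
      exact Finset.insert_subset hi₀ h'

lemma flipS_sign (i₀ : Fin n) (S : Finset (Fin n)) :
    ((-1 : ℝ)) ^ (flipS i₀ S).card = -((-1 : ℝ) ^ S.card) := by
  unfold flipS
  by_cases h : i₀ ∈ S
  · rw [if_pos h, Finset.card_erase_of_mem h]
    have h1 : 1 ≤ S.card := Finset.card_pos.mpr ⟨i₀, h⟩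
    have h2 : S.card = (S.card - 1) + 1 := by omega
    rw [show ((-1:ℝ) ^ S.card) = (-1:ℝ) ^ ((S.card - 1) + 1) by rw [← h2]]
    rw [pow_succ]
    ring
  · rw [if_neg h, Finset.card_insert_of_notMem h, pow_succ]
    ring

lemma card_symmDiff_parity (S T : Finset (Fin n)) :
    (S ∆ T).card + 2 * (S ∩ T).card = S.card + T.card := by
  classical
  have h1 : S ∆ T = (S ∪ T) \ (S ∩ T) := by
    rw [symmDiff_eq_sup_sdiff_inf]
    rfl
  have h2 : (S ∩ T) ⊆ (S ∪ T) := (Finset.inter_subset_left).trans Finset.subset_union_left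
  have h3 : (S ∆ T).card = (S ∪ T).card - (S ∩ T).card := by
    rw [h1, Finset.card_sdiff_of_subset h2]
  have h4 := Finset.card_union_add_card_inter S T
  have h5 : (S ∩ T).card ≤ (S ∪ T).card := Finset.card_le_card h2
  omega

lemma sign_symmDiff (S T : Finset (Fin n)) :
    ((-1 : ℝ)) ^ (S ∆ T).card = (-1 : ℝ) ^ S.card * (-1 : ℝ) ^ T.card := by
  have h := card_symmDiff_parity S T
  have : ((-1 : ℝ)) ^ ((S ∆ T).card + 2 * (S ∩ T).card) = ((-1 : ℝ)) ^ (S.card + T.card) := by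
    rw [h]
  rw [pow_add, pow_add, pow_mul, neg_one_sq, one_pow, mul_one] at this
  rw [this]

end MasterDefs
section MasterPts

variable {n : ℕ}

/-- basis index used by cluster `c`, element `l` -/
def qI (m : ℕ) (c : Bool) (l : Fin m) : Fin (2*m+3) :=
  ⟨1 + (cond c m 0) + l.val, by rcases c <;> simp <;> omega⟩

lemma qI_ne_zero (m : ℕ) (c : Bool) (l : Fin m) : (⟨0, by omega⟩ : Fin (2*m+3)) ≠ qI m c l := by
  unfold qI
  intro h
  have := congrArg Fin.val h
  rcases c <;> simp at this <;> omega

lemma qI_eq_iff (m : ℕ) (c c' : Bool) (l l' : Fin m) :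
    qI m c l = qI m c' l' ↔ (c = c' ∧ l = l') := by
  unfold qI
  rw [Fin.mk.injEq]
  constructor
  · intro h
    have hl := l.isLt
    have hl' := l'.isLt
    rcases c <;> rcases c' <;> simp at h ⊢ <;> [skip; omega; omega; skip] <;>
      exact Fin.ext (by omega)
  · rintro ⟨rfl, rfl⟩
    rfl

/-- atoms of the master measure -/
noncomputable def mpt (K : Finset (Fin n)) (r u v : Fin n → ℝ) (m : ℕ)
    (a : Finset (Fin n) × Bool × Fin m) : Fin n → EuclideanSpace ℝ (Fin (2*m+3)) :=
  fun i => if i ∈ K then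
      (EuclideanSpace.single ⟨0, by omega⟩ (if i ∈ a.1 then Real.sqrt (r i) else 0)
        + EuclideanSpace.single ⟨1, by omega⟩ 0)
    else
      (EuclideanSpace.single ⟨0, by omega⟩ (if a.2.1 then Real.sqrt (v i - u i) else 0)
        + EuclideanSpace.single (qI m a.2.1 a.2.2) (Real.sqrt (u i / 2)))

/-- weights of the master measure -/
noncomputable def mw (K : Finset (Fin n)) (σ : ℝ) (m : ℕ)
    (a : Finset (Fin n) × Bool × Fin m) : ℝ :=
  (if a.1 ⊆ K then (-1 : ℝ) ^ a.1.card else 0) * (if a.2.1 then σ else 1)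

/-- evaluation points -/
noncomputable def patM (K : Finset (Fin n)) (r y : Fin n → ℝ) (T : Finset (Fin n)) :
    Fin n → ℝ :=
  fun i => if i ∈ K then (if i ∈ T then r i else 0) else y i

/-- the alternating sums appearing in the master inequality -/
noncomputable def AgS (g : (Fin n → ℝ) → ℝ) (K : Finset (Fin n)) (r y : Fin n → ℝ) : ℝ :=
  ∑ S ∈ K.powerset, (-1 : ℝ) ^ (K.card + S.card) * g (patM K r y S)

lemma sqDistVec_mpt (K : Finset (Fin n)) (r u v : Fin n → ℝ)
    (hr : ∀ i, 0 ≤ r i) (hu : ∀ i, 0 ≤ u i) (huv : ∀ i, u i ≤ v i) (m : ℕ)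
    (a b : Finset (Fin n) × Bool × Fin m) :
    sqDistVec (mpt K r u v m a) (mpt K r u v m b)
      = fun i => if i ∈ K then (if (i ∈ a.1 ↔ i ∈ b.1) then 0 else r i)
          else (if a.2.1 = b.2.1 then (if a.2.2 = b.2.2 then 0 else u i) else v i) := by
  funext i
  unfold sqDistVec mpt
  by_cases hiK : i ∈ K
  · rw [if_pos hiK, if_pos hiK, if_pos hiK]
    rw [normsq_two_single _ _ _ (by intro h; have := congrArg Fin.val h; simp at this)
      (by intro h; have := congrArg Fin.val h; simp at this)]
    rw [if_pos rfl]
    by_cases ha : i ∈ a.1 <;> by_cases hb : i ∈ b.1 <;>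
      simp [ha, hb, Real.sq_sqrt (hr i)]
  · rw [if_neg hiK, if_neg hiK, if_neg hiK]
    rw [normsq_two_single _ _ _ (qI_ne_zero m a.2.1 a.2.2) (qI_ne_zero m b.2.1 b.2.2)]
    by_cases hc : a.2.1 = b.2.1
    · rw [if_pos hc, hc, sub_self]
      by_cases hl : a.2.2 = b.2.2
      · rw [if_pos hl, hl, if_pos ((qI_eq_iff m _ _ _ _).mpr ⟨rfl, rfl⟩)]
        simp
      · rw [if_neg hl, if_neg (fun h => hl ((qI_eq_iff m _ _ _ _).mp h).2)]
        rw [Real.sq_sqrt (by linarith [hu i])]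
        ring
    · rw [if_neg hc, if_neg (fun h => hc ((qI_eq_iff m _ _ _ _).mp h).1)]
      set s := Real.sqrt (v i - u i) with hsdef
      set t := Real.sqrt (u i / 2) with htdef
      have A : s ^ 2 = v i - u i := Real.sq_sqrt (by linarith [huv i])
      have B : t ^ 2 = u i / 2 := Real.sq_sqrt (by linarith [hu i])
      rcases Bool.eq_false_or_eq_true a.2.1 with h1 | h1 <;>
        rcases Bool.eq_false_or_eq_true b.2.1 with h2 | h2 <;>
          rw [h1, h2] at hc ⊢ <;> simp at hc ⊢ <;> nlinarith [A, B]

end MasterPts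
section MasterMeas

variable {n : ℕ}

lemma memMk_master (k : ℕ) (K : Finset (Fin n)) (σ : ℝ) (r u v : Fin n → ℝ) (m : ℕ)
    (hcase : K.card = k ∨ (K.card + 1 = k ∧ 1 + σ = 0)) :
    memMk k (dmIdx (mw K σ m) (mpt K r u v m)) := by
  intro A hA
  rw [dmMeas_dmIdx]
  set box : Set (Fin n → EuclideanSpace ℝ (Fin (2*m+3))) :=
    {x | ∀ i, x i ∈ A i} with hbox
  by_cases hex : ∃ i₀ ∈ K, A i₀ = Set.univ
  · obtain ⟨i₀, hi₀K, hi₀⟩ := hex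
    refine Finset.sum_involution (fun a _ => (flipS i₀ a.1, a.2)) ?_ ?_
      (fun a _ => Finset.mem_univ _) ?_
    · intro a _
      have hw : mw K σ m (flipS i₀ a.1, a.2) = - mw K σ m a := by
        unfold mw
        simp only
        rw [flipS_sign]
        by_cases hsub : a.1 ⊆ K
        · rw [if_pos ((flipS_subset_iff hi₀K a.1).mpr hsub), if_pos hsub]; ring
        · rw [if_neg (fun h => hsub ((flipS_subset_iff hi₀K a.1).mp h)), if_neg hsub]; ring
      have hpteq : ∀ i, i ≠ i₀ →
          mpt K r u v m (flipS i₀ a.1, a.2) i = mpt K r u v m a i := by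
        intro i hi
        unfold mpt
        simp only
        by_cases hiK : i ∈ K
        · rw [if_pos hiK, if_pos hiK]
          congr 2
          simp [flipS_mem i₀ a.1 hi]
        · rw [if_neg hiK, if_neg hiK]
      have hpt : (mpt K r u v m (flipS i₀ a.1, a.2) ∈ box)
          ↔ (mpt K r u v m a ∈ box) := by
        simp only [hbox, Set.mem_setOf_eq]
        constructor
        · intro h i
          by_cases hi : i = i₀
          · subst hi; rw [hi₀]; trivial
          · rw [← hpteq i hi]; exact h i
        · intro h i
          by_cases hi : i = i₀
          · subst hi; rw [hi₀]; trivial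
          · rw [hpteq i hi]; exact h i
      by_cases hmem : mpt K r u v m a ∈ box
      · rw [if_pos hmem, if_pos (hpt.mpr hmem), hw]; ring
      · rw [if_neg hmem, if_neg (fun h => hmem (hpt.mp h))]; ring
    · intro a _ _ hEq
      exact flipS_ne i₀ a.1 (congrArg Prod.fst hEq)
    · intro a _
      simp [flipS_flipS]
  · push_neg at hex
    have hsub : (Finset.univ.filter fun i => A i = Set.univ) ⊆ Kᶜ := by
      intro i hi
      rw [Finset.mem_compl]
      intro hiK
      exact hex i hiK (Finset.mem_filter.mp hi).2
    have hccard : (Kᶜ : Finset (Fin n)).card = n - K.card := by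
      rw [Finset.card_compl, Fintype.card_fin]
    have hcardK : K.card ≤ n := by
      have := Finset.card_le_card (Finset.subset_univ K)
      rwa [Finset.card_univ, Fintype.card_fin] at this
    have h1 := Finset.card_le_card hsub
    rcases hcase with hk | ⟨hk, hσ⟩
    · exfalso; omega
    · have hcard2 : (Kᶜ : Finset (Fin n)).card ≤
          (Finset.univ.filter fun i => A i = Set.univ).card := by omega
      have heq := Finset.eq_of_subset_of_card_le hsub hcard2
      have hfull : ∀ i, i ∉ K → A i = Set.univ := by
        intro i hiK
        have hmem : i ∈ (Finset.univ.filter fun i => A i = Set.univ) := by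
          rw [heq]; exact Finset.mem_compl.mpr hiK
        exact (Finset.mem_filter.mp hmem).2
      have hind : ∀ (S : Finset (Fin n)) (c : Bool) (l : Fin m),
          (mpt K r u v m (S, c, l) ∈ box)
            ↔ (∀ i ∈ K, (EuclideanSpace.single (⟨0, by omega⟩ : Fin (2*m+3))
                (if i ∈ S then Real.sqrt (r i) else 0)
                + EuclideanSpace.single (⟨1, by omega⟩ : Fin (2*m+3)) 0) ∈ A i) := by
        intro S c l
        simp only [hbox, Set.mem_setOf_eq]
        constructor
        · intro h i hiK
          have h2 := h i
          unfold mpt at h2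
          simp only at h2
          rwa [if_pos hiK] at h2
        · intro h i
          by_cases hiK : i ∈ K
          · unfold mpt
            simp only
            rw [if_pos hiK]
            exact h i hiK
          · rw [hfull i hiK]; trivial
      rw [Fintype.sum_prod_type]
      refine Finset.sum_eq_zero ?_
      intro S _
      rw [Fintype.sum_prod_type]
      have hterm : ∀ (c : Bool) (l : Fin m),
          (@ite ℝ (mpt K r u v m (S, c, l) ∈ box)
              (Classical.propDecidable _) (mw K σ m (S, c, l)) 0)
          = ((if (∀ i ∈ K, (EuclideanSpace.single (⟨0, by omega⟩ : Fin (2*m+3))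
                (if i ∈ S then Real.sqrt (r i) else 0)
                + EuclideanSpace.single (⟨1, by omega⟩ : Fin (2*m+3)) 0) ∈ A i)
              then (if S ⊆ K then (-1 : ℝ) ^ S.card else 0) else 0) * (if c then σ else 1)) := by
        intro c l
        by_cases hI : (∀ i ∈ K, (EuclideanSpace.single (⟨0, by omega⟩ : Fin (2*m+3))
                (if i ∈ S then Real.sqrt (r i) else 0)
                + EuclideanSpace.single (⟨1, by omega⟩ : Fin (2*m+3)) 0) ∈ A i)
        · rw [if_pos hI, if_pos ((hind S c l).mpr hI)]
          rfl
        · rw [if_neg hI, if_neg (fun h => hI ((hind S c l).mp h)), zero_mul]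
      refine Eq.trans
        (Finset.sum_congr rfl (fun c _ => Finset.sum_congr rfl (fun l _ => hterm c l))) ?_
      rw [Fintype.sum_bool]
      rw [Finset.sum_const, Finset.sum_const]
      rw [Finset.card_univ, Fintype.card_fin]
      rw [if_pos rfl, if_neg (Bool.false_ne_true)]
      rw [← smul_add]
      rw [show ∀ (X : ℝ), X * σ + X * 1 = X * (1 + σ) from fun X => by ring]
      rw [hσ, mul_zero, smul_zero]
  
end MasterMeas
section MasterComp

open scoped symmDiff

variable {n : ℕ}

lemma sum_prod_reorg {A B : Type*} [Fintype A] [Fintype B] (f : A × B → A × B → ℝ) :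
    (∑ a : A × B, ∑ b : A × B, f a b)
      = ∑ x : A, ∑ y : A, ∑ p : B, ∑ q : B, f (x, p) (y, q) := by
  rw [Fintype.sum_prod_type]
  refine Finset.sum_congr rfl fun x _ => ?_
  rw [Finset.sum_congr rfl fun p (_ : p ∈ Finset.univ) =>
    (Fintype.sum_prod_type (f := fun b : A × B => f (x, p) b))]
  exact Finset.sum_comm

lemma sum_pair {m : ℕ} (X Y : ℝ) :
    (∑ l : Fin m, ∑ l' : Fin m, if l = l' then X else Y)
      = (m : ℝ) * X + (m : ℝ) * ((m : ℝ) - 1) * Y := by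
  have h1 : ∀ l : Fin m, (∑ l' : Fin m, if l = l' then X else Y)
      = X + ((m : ℝ) - 1) * Y := by
    intro l
    have h2 : ∀ l' : Fin m, (if l = l' then X else Y)
        = Y + (if l' = l then X - Y else 0) := by
      intro l'
      by_cases h : l' = l
      · subst h; rw [if_pos rfl, if_pos rfl]; ring
      · rw [if_neg (fun hh => h hh.symm), if_neg h]; ring
    rw [Finset.sum_congr rfl fun l' _ => h2 l', Finset.sum_add_distrib,
      Finset.sum_const, Finset.sum_ite_eq' Finset.univ l (fun _ => X - Y),
      if_pos (Finset.mem_univ l), Finset.card_univ, Fintype.card_fin, nsmul_eq_mul]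
    ring
  rw [Finset.sum_congr rfl fun l _ => h1 l, Finset.sum_const, Finset.card_univ,
    Fintype.card_fin, nsmul_eq_mul]
  ring

lemma dblInt_master (g : (Fin n → ℝ) → ℝ) (K : Finset (Fin n)) (σ : ℝ)
    (r u v : Fin n → ℝ) (hr : ∀ i, 0 ≤ r i) (hu : ∀ i, 0 ≤ u i)
    (huv : ∀ i, u i ≤ v i) (m : ℕ) :
    dblInt (dmIdx (mw K σ m) (mpt K r u v m)) g
      = 2 ^ K.card * ∑ T ∈ K.powerset, (-1 : ℝ) ^ T.card *
          ((1 + σ ^ 2) * ((m : ℝ) * g (patM K r (fun _ => 0) T)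
              + (m : ℝ) * ((m : ℝ) - 1) * g (patM K r u T))
            + 2 * σ * (m : ℝ) ^ 2 * g (patM K r v T)) := by
  classical
  set C : Finset (Fin n) → ℝ := fun T =>
    (1 + σ ^ 2) * ((m : ℝ) * g (patM K r (fun _ => 0) T)
      + (m : ℝ) * ((m : ℝ) - 1) * g (patM K r u T))
    + 2 * σ * (m : ℝ) ^ 2 * g (patM K r v T) with hC
  have hpat : ∀ a b : Finset (Fin n) × Bool × Fin m,
      sqDistVec (mpt K r u v m a) (mpt K r u v m b)
        = patM K r (if a.2.1 = b.2.1 then (if a.2.2 = b.2.2 then (fun _ => 0) else u) else v)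
            (a.1 ∆ b.1) := by
    intro a b
    rw [sqDistVec_mpt K r u v hr hu huv m a b]
    funext i
    unfold patM
    by_cases hiK : i ∈ K
    · rw [if_pos hiK, if_pos hiK]
      by_cases hmem : i ∈ a.1 ∆ b.1
      · rw [if_pos hmem, if_neg]
        rw [Finset.mem_symmDiff] at hmem
        tauto
      · rw [if_neg hmem, if_pos]
        rw [Finset.mem_symmDiff] at hmem
        tauto
    · rw [if_neg hiK, if_neg hiK]
      by_cases h1 : a.2.1 = b.2.1
      · rw [if_pos h1, if_pos h1]
        by_cases h2 : a.2.2 = b.2.2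
        · rw [if_pos h2, if_pos h2]
        · rw [if_neg h2, if_neg h2]
      · rw [if_neg h1, if_neg h1]
  have hclu : ∀ T : Finset (Fin n),
      (∑ p : Bool × Fin m, ∑ q : Bool × Fin m,
        (if p.1 then σ else 1) * (if q.1 then σ else 1)
          * g (patM K r (if p.1 = q.1 then (if p.2 = q.2 then (fun _ => 0) else u) else v) T))
        = C T := by
    intro T
    rw [sum_prod_reorg (f := fun p q : Bool × Fin m =>
      (if p.1 then σ else 1) * (if q.1 then σ else 1)
        * g (patM K r (if p.1 = q.1 then (if p.2 = q.2 then (fun _ => 0) else u) else v) T))]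
    rw [Fintype.sum_bool]
    rw [Fintype.sum_bool, Fintype.sum_bool]
    simp only [show (true = false) = False by simp, show (false = true) = False by simp,
      eq_self_iff_true, if_true, if_false]
    have hTT : (∑ l : Fin m, ∑ l' : Fin m,
        σ * σ * g (patM K r (if l = l' then (fun _ => 0) else u) T))
        = σ * σ * ((m : ℝ) * g (patM K r (fun _ => 0) T)
            + (m : ℝ) * ((m : ℝ) - 1) * g (patM K r u T)) := by
      have : ∀ l l' : Fin m, σ * σ * g (patM K r (if l = l' then (fun _ => 0) else u) T)
          = (if l = l' then σ * σ * g (patM K r (fun _ => 0) T)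
              else σ * σ * g (patM K r u T)) := by
        intro l l'
        by_cases h : l = l' <;> simp [h]
      rw [Finset.sum_congr rfl fun l _ => Finset.sum_congr rfl fun l' _ => this l l']
      rw [sum_pair]
      ring
    have hFF : (∑ l : Fin m, ∑ l' : Fin m,
        1 * 1 * g (patM K r (if l = l' then (fun _ => 0) else u) T))
        = (m : ℝ) * g (patM K r (fun _ => 0) T)
            + (m : ℝ) * ((m : ℝ) - 1) * g (patM K r u T) := by
      have : ∀ l l' : Fin m, 1 * 1 * g (patM K r (if l = l' then (fun _ => 0) else u) T)
          = (if l = l' then g (patM K r (fun _ => 0) T) else g (patM K r u T)) := by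
        intro l l'
        by_cases h : l = l' <;> simp [h]
      rw [Finset.sum_congr rfl fun l _ => Finset.sum_congr rfl fun l' _ => this l l']
      rw [sum_pair]
    have hconst : ∀ (c : ℝ), (∑ _l : Fin m, ∑ _l' : Fin m, c) = (m : ℝ) ^ 2 * c := by
      intro c
      rw [Finset.sum_const, Finset.sum_const, Finset.card_univ, Fintype.card_fin,
        smul_smul, nsmul_eq_mul]
      push_cast
      ring
    rw [hTT, hFF, hconst (σ * 1 * g (patM K r v T)), hconst (1 * σ * g (patM K r v T))]
    rw [hC]
    ring
  rw [dblInt_dmIdx]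
  rw [Finset.sum_congr rfl fun a (_ : a ∈ Finset.univ) =>
    Finset.sum_congr rfl fun b (_ : b ∈ Finset.univ) => by rw [hpat a b]]
  rw [sum_prod_reorg (f := fun a b : Finset (Fin n) × Bool × Fin m =>
    mw K σ m a * mw K σ m b
      * g (patM K r (if a.2.1 = b.2.1 then (if a.2.2 = b.2.2 then (fun _ => 0) else u) else v)
          (a.1 ∆ b.1)))]
  have hmid : ∀ x y : Finset (Fin n),
      (∑ p : Bool × Fin m, ∑ q : Bool × Fin m,
        mw K σ m (x, p) * mw K σ m (y, q)
          * g (patM K r (if p.1 = q.1 then (if p.2 = q.2 then (fun _ => 0) else u) else v)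
              (x ∆ y)))
        = (if x ⊆ K then (-1 : ℝ) ^ x.card else 0)
            * (if y ⊆ K then (-1 : ℝ) ^ y.card else 0) * C (x ∆ y) := by
    intro x y
    rw [← hclu (x ∆ y), Finset.mul_sum]
    refine Finset.sum_congr rfl fun p _ => ?_
    rw [Finset.mul_sum]
    refine Finset.sum_congr rfl fun q _ => ?_
    unfold mw
    ring
  rw [Finset.sum_congr rfl fun x (_ : x ∈ Finset.univ) =>
    Finset.sum_congr rfl fun y (_ : y ∈ Finset.univ) => hmid x y]
  have hvan1 : ∀ x : Finset (Fin n), x ∈ Finset.univ → x ∉ K.powerset →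
      (∑ y : Finset (Fin n), (if x ⊆ K then (-1 : ℝ) ^ x.card else 0)
        * (if y ⊆ K then (-1 : ℝ) ^ y.card else 0) * C (x ∆ y)) = 0 := by
    intro x _ hx
    rw [Finset.mem_powerset] at hx
    refine Finset.sum_eq_zero fun y _ => ?_
    rw [if_neg hx, zero_mul, zero_mul]
  rw [← Finset.sum_subset (Finset.subset_univ K.powerset) hvan1]
  have hinner : ∀ x : Finset (Fin n), x ∈ K.powerset →
      (∑ y : Finset (Fin n), (if x ⊆ K then (-1 : ℝ) ^ x.card else 0)
        * (if y ⊆ K then (-1 : ℝ) ^ y.card else 0) * C (x ∆ y))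
      = ∑ T ∈ K.powerset, (-1 : ℝ) ^ T.card * C T := by
    intro x hx
    rw [Finset.mem_powerset] at hx
    have hvan2 : ∀ y : Finset (Fin n), y ∈ Finset.univ → y ∉ K.powerset →
        (if x ⊆ K then (-1 : ℝ) ^ x.card else 0)
          * (if y ⊆ K then (-1 : ℝ) ^ y.card else 0) * C (x ∆ y) = 0 := by
      intro y _ hy
      rw [Finset.mem_powerset] at hy
      rw [if_neg hy, mul_zero, zero_mul]
    rw [← Finset.sum_subset (Finset.subset_univ K.powerset) hvan2]
    refine Finset.sum_nbij' (fun y => x ∆ y) (fun T => x ∆ T) ?_ ?_ ?_ ?_ ?_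
    · intro y hy
      rw [Finset.mem_powerset] at hy ⊢
      exact le_trans symmDiff_le_sup (sup_le hx hy)
    · intro T hT
      rw [Finset.mem_powerset] at hT ⊢
      exact le_trans symmDiff_le_sup (sup_le hx hT)
    · intro y _
      exact symmDiff_symmDiff_cancel_left x y
    · intro T _
      exact symmDiff_symmDiff_cancel_left x T
    · intro y hy
      rw [Finset.mem_powerset] at hy
      rw [if_pos hx, if_pos hy, sign_symmDiff]
  rw [Finset.sum_congr rfl hinner]
  rw [Finset.sum_const, Finset.card_powerset, nsmul_eq_mul]
  push_cast
  ring

end MasterComp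
section Primitives

variable {n : ℕ}

lemma arch_nonneg (A B : ℝ) (h : ∀ M : ℕ, 0 ≤ A + M * B) : 0 ≤ B := by
  by_contra hB
  push_neg at hB
  obtain ⟨M, hM⟩ := exists_nat_gt (A / (-B))
  have h2 : A < (M : ℝ) * (-B) := by
    rw [div_lt_iff₀ (by linarith)] at hM
    linarith [hM]
  have h3 := h M
  nlinarith

lemma AgS_eval (g : (Fin n → ℝ) → ℝ) (K : Finset (Fin n)) (r : Fin n → ℝ)
    (y : Fin n → ℝ) :
    (∑ T ∈ K.powerset, (-1 : ℝ) ^ T.card * g (patM K r y T))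
      = (-1 : ℝ) ^ K.card * AgS g K r y := by
  rw [AgS, Finset.mul_sum]
  refine Finset.sum_congr rfl fun T _ => ?_
  have h2 : (-1 : ℝ) ^ K.card * (-1 : ℝ) ^ K.card = 1 := by
    rw [← pow_add]; exact Even.neg_one_pow ⟨K.card, rfl⟩
  calc (-1 : ℝ) ^ T.card * g (patM K r y T)
      = ((-1 : ℝ) ^ K.card * (-1 : ℝ) ^ K.card) * ((-1 : ℝ) ^ T.card * g (patM K r y T)) := by
        rw [h2, one_mul]
    _ = (-1 : ℝ) ^ K.card * ((-1 : ℝ) ^ (K.card + T.card) * g (patM K r y T)) := by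
        rw [pow_add]; ring

lemma master_sum_eval (g : (Fin n → ℝ) → ℝ) (K : Finset (Fin n)) (σ : ℝ)
    (r u v : Fin n → ℝ) (m : ℕ) :
    (∑ T ∈ K.powerset, (-1 : ℝ) ^ T.card *
        ((1 + σ ^ 2) * ((m : ℝ) * g (patM K r (fun _ => 0) T)
            + (m : ℝ) * ((m : ℝ) - 1) * g (patM K r u T))
          + 2 * σ * (m : ℝ) ^ 2 * g (patM K r v T)))
      = (-1 : ℝ) ^ K.card *
          ((1 + σ ^ 2) * ((m : ℝ) * AgS g K r (fun _ => 0)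
              + (m : ℝ) * ((m : ℝ) - 1) * AgS g K r u)
            + 2 * σ * (m : ℝ) ^ 2 * AgS g K r v) := by
  have hsplit : ∀ T ∈ K.powerset, (-1 : ℝ) ^ T.card *
        ((1 + σ ^ 2) * ((m : ℝ) * g (patM K r (fun _ => 0) T)
            + (m : ℝ) * ((m : ℝ) - 1) * g (patM K r u T))
          + 2 * σ * (m : ℝ) ^ 2 * g (patM K r v T))
      = ((1 + σ ^ 2) * (m : ℝ)) * ((-1 : ℝ) ^ T.card * g (patM K r (fun _ => 0) T))
        + ((1 + σ ^ 2) * ((m : ℝ) * ((m : ℝ) - 1)))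
            * ((-1 : ℝ) ^ T.card * g (patM K r u T))
        + (2 * σ * (m : ℝ) ^ 2) * ((-1 : ℝ) ^ T.card * g (patM K r v T)) := by
    intro T _
    ring
  rw [Finset.sum_congr rfl hsplit, Finset.sum_add_distrib, Finset.sum_add_distrib,
    ← Finset.mul_sum, ← Finset.mul_sum, ← Finset.mul_sum,
    AgS_eval g K r (fun _ => 0), AgS_eval g K r u, AgS_eval g K r v]
  ring

lemma master_ineq {k : ℕ} {g : (Fin n → ℝ) → ℝ} (hpdi : PDI n k g)
    (K : Finset (Fin n)) (σ : ℝ)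
    (hcase : K.card = k ∨ (K.card + 1 = k ∧ 1 + σ = 0))
    (r u v : Fin n → ℝ) (hr : ∀ i, 0 ≤ r i) (hu : ∀ i, 0 ≤ u i)
    (huv : ∀ i, u i ≤ v i) (m : ℕ) :
    0 ≤ (-1 : ℝ) ^ k * ((-1 : ℝ) ^ K.card *
        ((1 + σ ^ 2) * ((m : ℝ) * AgS g K r (fun _ => 0)
            + (m : ℝ) * ((m : ℝ) - 1) * AgS g K r u)
          + 2 * σ * (m : ℝ) ^ 2 * AgS g K r v)) := by
  have hmem := memMk_master k K σ r u v m hcase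
  have hineq := hpdi (2 * m + 3) _ hmem
  rw [dblInt_master g K σ r u v hr hu huv m, master_sum_eval g K σ r u v m] at hineq
  have hpow : (0 : ℝ) < 2 ^ K.card := by positivity
  nlinarith [hineq]

lemma primP1 {k : ℕ} {g : (Fin n → ℝ) → ℝ} (hpdi : PDI n k g)
    (K : Finset (Fin n)) (hK : K.card = k) (r y : Fin n → ℝ)
    (hr : ∀ i, 0 ≤ r i) (hy : ∀ i, 0 ≤ y i) :
    0 ≤ AgS g K r y := by
  have hkey : ∀ M : ℕ, 0 ≤ AgS g K r (fun _ => 0) + (M : ℝ) * AgS g K r y := by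
    intro M
    have h := master_ineq hpdi K 0 (Or.inl hK) r y y hr hy (fun i => le_refl _) (M + 1)
    rw [hK] at h
    have hsgn : ((-1 : ℝ) ^ k * ((-1 : ℝ) ^ k)) = 1 := by
      rw [← pow_add]; exact Even.neg_one_pow ⟨k, rfl⟩
    have h2 : 0 ≤ ((M : ℝ) + 1) * (AgS g K r (fun _ => 0) + (M : ℝ) * AgS g K r y) := by
      have hexp : (-1 : ℝ) ^ k * ((-1 : ℝ) ^ k *
          ((1 + (0:ℝ) ^ 2) * (((M + 1 : ℕ) : ℝ) * AgS g K r (fun _ => 0)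
              + ((M + 1 : ℕ) : ℝ) * (((M + 1 : ℕ) : ℝ) - 1) * AgS g K r y)
            + 2 * 0 * ((M + 1 : ℕ) : ℝ) ^ 2 * AgS g K r y))
          = ((-1 : ℝ) ^ k * ((-1 : ℝ) ^ k)) * (((M : ℝ) + 1)
              * (AgS g K r (fun _ => 0) + (M : ℝ) * AgS g K r y)) := by
        push_cast
        ring
      rw [hexp, hsgn, one_mul] at h
      exact h
    nlinarith [h2, Nat.cast_nonneg (α := ℝ) M]
  have := arch_nonneg _ _ hkey
  exact this

lemma primP2 {k : ℕ} {g : (Fin n → ℝ) → ℝ} (hpdi : PDI n k g)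
    (K : Finset (Fin n)) (hK : K.card = k) (r u v : Fin n → ℝ)
    (hr : ∀ i, 0 ≤ r i) (hu : ∀ i, 0 ≤ u i) (huv : ∀ i, u i ≤ v i) :
    AgS g K r v ≤ AgS g K r u := by
  have hkey : ∀ M : ℕ, 0 ≤ (AgS g K r (fun _ => 0) - AgS g K r v)
      + (M : ℝ) * (AgS g K r u - AgS g K r v) := by
    intro M
    have h := master_ineq hpdi K (-1) (Or.inl hK) r u v hr hu huv (M + 1)
    rw [hK] at h
    have hsgn : ((-1 : ℝ) ^ k * ((-1 : ℝ) ^ k)) = 1 := by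
      rw [← pow_add]; exact Even.neg_one_pow ⟨k, rfl⟩
    have hexp : (-1 : ℝ) ^ k * ((-1 : ℝ) ^ k *
        ((1 + (-1 : ℝ) ^ 2) * (((M + 1 : ℕ) : ℝ) * AgS g K r (fun _ => 0)
            + ((M + 1 : ℕ) : ℝ) * (((M + 1 : ℕ) : ℝ) - 1) * AgS g K r u)
          + 2 * (-1) * ((M + 1 : ℕ) : ℝ) ^ 2 * AgS g K r v))
        = ((-1 : ℝ) ^ k * ((-1 : ℝ) ^ k)) * ((2 * ((M : ℝ) + 1))
            * ((AgS g K r (fun _ => 0) - AgS g K r v)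
              + (M : ℝ) * (AgS g K r u - AgS g K r v))) := by
      push_cast
      ring
    rw [hexp, hsgn, one_mul] at h
    nlinarith [h, Nat.cast_nonneg (α := ℝ) M]
  have := arch_nonneg _ _ hkey
  linarith

lemma primP3 {k : ℕ} {g : (Fin n → ℝ) → ℝ} (hpdi : PDI n k g)
    (K : Finset (Fin n)) (hK : K.card + 1 = k) (r u v : Fin n → ℝ)
    (hr : ∀ i, 0 ≤ r i) (hu : ∀ i, 0 ≤ u i) (huv : ∀ i, u i ≤ v i) :
    AgS g K r u ≤ AgS g K r v := by
  have hkey : ∀ M : ℕ, 0 ≤ (AgS g K r v - AgS g K r (fun _ => 0))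
      + (M : ℝ) * (AgS g K r v - AgS g K r u) := by
    intro M
    have h := master_ineq hpdi K (-1) (Or.inr ⟨hK, by norm_num⟩) r u v hr hu huv (M + 1)
    have hsgn : ((-1 : ℝ) ^ k * ((-1 : ℝ) ^ K.card)) = -1 := by
      have h2 : (-1 : ℝ) ^ K.card * (-1 : ℝ) ^ K.card = 1 := by
        rw [← pow_add]; exact Even.neg_one_pow ⟨K.card, rfl⟩
      rw [← hK, pow_add, pow_one]
      linear_combination (-1 : ℝ) * h2
    have hexp : (-1 : ℝ) ^ k * ((-1 : ℝ) ^ K.card *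
        ((1 + (-1 : ℝ) ^ 2) * (((M + 1 : ℕ) : ℝ) * AgS g K r (fun _ => 0)
            + ((M + 1 : ℕ) : ℝ) * (((M + 1 : ℕ) : ℝ) - 1) * AgS g K r u)
          + 2 * (-1) * ((M + 1 : ℕ) : ℝ) ^ 2 * AgS g K r v))
        = ((-1 : ℝ) ^ k * ((-1 : ℝ) ^ K.card)) * ((2 * ((M : ℝ) + 1))
            * ((AgS g K r (fun _ => 0) - AgS g K r v)
              + (M : ℝ) * (AgS g K r u - AgS g K r v))) := by
      push_cast
      ring
    rw [hexp, hsgn] at h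
    nlinarith [h, Nat.cast_nonneg (α := ℝ) M]
  have := arch_nonneg _ _ hkey
  linarith

end Primitives
section Comb

variable {n k : ℕ} {g : (Fin n → ℝ) → ℝ}

/-- `ι_W t` -/
noncomputable def keepF (t : Fin n → ℝ) (W : Finset (Fin n)) : Fin n → ℝ :=
  fun i => if i ∈ W then t i else 0

lemma keepF_mem_Q {t : Fin n → ℝ} (ht : t ∈ Qset n) (W : Finset (Fin n)) :
    keepF t W ∈ Qset n := by
  intro i
  unfold keepF
  by_cases h : i ∈ W
  · rw [if_pos h]; exact ht i
  · rw [if_neg h]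

lemma patM_mem_Q {t : Fin n → ℝ} (ht : t ∈ Qset n) (U S : Finset (Fin n)) :
    patM U t t S ∈ Qset n := by
  intro i
  unfold patM
  by_cases h : i ∈ U
  · rw [if_pos h]
    by_cases h2 : i ∈ S
    · rw [if_pos h2]; exact ht i
    · rw [if_neg h2]
  · rw [if_neg h]; exact ht i

lemma update_mem_Q {t : Fin n → ℝ} (ht : t ∈ Qset n) {j : Fin n} {y : ℝ} (hy : 0 ≤ y) :
    Function.update t j y ∈ Qset n := by
  intro i
  by_cases h : i = j
  · subst h; rw [Function.update_self]; exact hy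
  · rw [Function.update_of_ne h]; exact ht i

lemma posCount_keepF_le (t : Fin n → ℝ) (W : Finset (Fin n)) :
    posCount (keepF t W) ≤ W.card := by
  refine Finset.card_le_card ?_
  intro i hi
  rw [Finset.mem_filter] at hi
  by_contra h
  rw [show keepF t W i = 0 from if_neg h] at hi
  exact lt_irrefl 0 hi.2

lemma AgS_congr (U : Finset (Fin n)) {r r' y y' : Fin n → ℝ}
    (hr : ∀ i ∈ U, r i = r' i) (hy : ∀ i, i ∉ U → y i = y' i) :
    AgS g U r y = AgS g U r' y' := by
  unfold AgS
  refine Finset.sum_congr rfl fun S _ => ?_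
  congr 1
  congr 1
  funext i
  unfold patM
  by_cases h : i ∈ U
  · rw [if_pos h, if_pos h]
    by_cases h2 : i ∈ S
    · rw [if_pos h2, if_pos h2, hr i h]
    · rw [if_neg h2, if_neg h2]
  · rw [if_neg h, if_neg h, hy i h]

lemma AgS_empty (r y : Fin n → ℝ) : AgS g ∅ r y = g y := by
  unfold AgS
  rw [Finset.powerset_empty, Finset.sum_singleton]
  have : patM (∅ : Finset (Fin n)) r y ∅ = y := by
    funext i
    unfold patM
    rw [if_neg (Finset.notMem_empty i)]
  rw [this]
  simp

/-- collapse: if `|U| = k` then `AgS g U t 0 = g (ι_U t)` -/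
lemma AgS_collapse (hk : 1 ≤ k)
    (h0 : ∀ t ∈ Qset n, posCount t < k → g t = 0)
    (U : Finset (Fin n)) (hU : U.card = k) {t : Fin n → ℝ} (ht : t ∈ Qset n) :
    AgS g U t (fun _ => 0) = g (keepF t U) := by
  unfold AgS
  have hpat : ∀ S ∈ U.powerset, patM U t (fun _ => 0) S = keepF t S := by
    intro S hS
    rw [Finset.mem_powerset] at hS
    funext i
    unfold patM keepF
    by_cases h : i ∈ U
    · rw [if_pos h]
    · rw [if_neg h, if_neg (fun hiS => h (hS hiS))]
  rw [Finset.sum_congr rfl fun S hS => by rw [hpat S hS]]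
  rw [Finset.sum_eq_single_of_mem U (Finset.mem_powerset.mpr (le_refl U))]
  · rw [Even.neg_one_pow ⟨U.card, rfl⟩, one_mul]
  · intro S hS hSne
    rw [Finset.mem_powerset] at hS
    have hcard : S.card < k := by
      have h1 := Finset.card_le_card hS
      have h2 : S.card ≠ U.card := fun h =>
        hSne (Finset.eq_of_subset_of_card_le hS (le_of_eq h.symm))
      omega
    rw [h0 (keepF t S) (keepF_mem_Q ht S)
      (lt_of_le_of_lt (posCount_keepF_le t S) hcard), mul_zero]

/-- vanishing of alternating sums with few positive coordinates -/
lemma AgS_vanish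
    (h0 : ∀ t ∈ Qset n, posCount t < k → g t = 0)
    (U : Finset (Fin n)) {t : Fin n → ℝ} (ht : t ∈ Qset n) (J : Finset (Fin n))
    (hz : ∀ i, i ∉ U → i ∉ J → t i = 0) (hcard : U.card + J.card < k) :
    AgS g U t t = 0 := by
  unfold AgS
  refine Finset.sum_eq_zero fun S hS => ?_
  rw [Finset.mem_powerset] at hS
  have hpos : posCount (patM U t t S) < k := by
    have hsub : (Finset.univ.filter fun i => 0 < patM U t t S i) ⊆ S ∪ J := by
      intro i hi
      rw [Finset.mem_filter] at hi
      rw [Finset.mem_union]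
      unfold patM at hi
      by_cases h : i ∈ U
      · rw [if_pos h] at hi
        by_cases h2 : i ∈ S
        · exact Or.inl h2
        · rw [if_neg h2] at hi; exact absurd hi.2 (lt_irrefl 0)
      · rw [if_neg h] at hi
        by_cases h3 : i ∈ J
        · exact Or.inr h3
        · rw [hz i h h3] at hi; exact absurd hi.2 (lt_irrefl 0)
    calc posCount (patM U t t S) ≤ (S ∪ J).card := Finset.card_le_card hsub
      _ ≤ S.card + J.card := Finset.card_union_le S J
      _ ≤ U.card + J.card := by
          have := Finset.card_le_card hS
          omega
      _ < k := hcard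
  rw [h0 _ (patM_mem_Q ht U S) hpos, mul_zero]

/-- the splitting identity `Δ_{U∪{i}} = Δ_U(t) - Δ_U(t[i↦0])` -/
lemma AgS_insert (U : Finset (Fin n)) {i : Fin n} (hiU : i ∉ U) (t : Fin n → ℝ) :
    AgS g (insert i U) t t
      = AgS g U t t
        - AgS g U (Function.update t i 0) (Function.update t i 0) := by
  unfold AgS
  rw [Finset.sum_powerset_insert hiU]
  have hcard : (insert i U).card = U.card + 1 := Finset.card_insert_of_notMem hiU
  have h1 : ∀ S ∈ U.powerset,
      (-1 : ℝ) ^ ((insert i U).card + (insert i S).card)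
          * g (patM (insert i U) t t (insert i S))
        = (-1 : ℝ) ^ (U.card + S.card) * g (patM U t t S) := by
    intro S hS
    rw [Finset.mem_powerset] at hS
    have hiS : i ∉ S := fun h => hiU (hS h)
    have hpat : patM (insert i U) t t (insert i S) = patM U t t S := by
      funext j
      unfold patM
      by_cases hj : j = i
      · subst hj
        rw [if_pos (Finset.mem_insert_self j U), if_pos (Finset.mem_insert_self j S),
          if_neg hiU]
      · by_cases hjU : j ∈ U
        · rw [if_pos (Finset.mem_insert_of_mem hjU), if_pos hjU]
          by_cases hjS : j ∈ S
          · rw [if_pos (Finset.mem_insert_of_mem hjS), if_pos hjS]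
          · rw [if_neg (fun h => (Finset.mem_insert.mp h).elim hj hjS), if_neg hjS]
        · rw [if_neg (fun h => (Finset.mem_insert.mp h).elim hj hjU), if_neg hjU]
    rw [hpat, hcard, Finset.card_insert_of_notMem hiS]
    congr 1
    rw [show U.card + 1 + (S.card + 1) = (U.card + S.card) + 2 by ring, pow_add]
    norm_num
  have h2 : ∀ S ∈ U.powerset,
      (-1 : ℝ) ^ ((insert i U).card + S.card) * g (patM (insert i U) t t S)
        = -((-1 : ℝ) ^ (U.card + S.card)
            * g (patM U (Function.update t i 0) (Function.update t i 0) S)) := by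
    intro S hS
    rw [Finset.mem_powerset] at hS
    have hiS : i ∉ S := fun h => hiU (hS h)
    have hpat : patM (insert i U) t t S
        = patM U (Function.update t i 0) (Function.update t i 0) S := by
      funext j
      unfold patM
      by_cases hj : j = i
      · subst hj
        rw [if_pos (Finset.mem_insert_self j U), if_neg hiS, if_neg hiU,
          Function.update_self]
      · rw [Function.update_of_ne hj]
        by_cases hjU : j ∈ U
        · rw [if_pos (Finset.mem_insert_of_mem hjU), if_pos hjU]
        · rw [if_neg (fun h => (Finset.mem_insert.mp h).elim hj hjU), if_neg hjU]
    rw [hpat, hcard]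
    rw [show U.card + 1 + S.card = (U.card + S.card) + 1 by ring, pow_add]
    ring
  rw [Finset.sum_congr rfl h1, Finset.sum_congr rfl h2]
  rw [Finset.sum_neg_distrib]
  ring

end Comb
section Mono

variable {n k : ℕ} {g : (Fin n → ℝ) → ℝ}

lemma mono_top (hpdi : PDI n k g) (U : Finset (Fin n)) (hU : U.card + 1 = k)
    {j : Fin n} (hjU : j ∉ U) {t : Fin n → ℝ} (ht : t ∈ Qset n) {y' : ℝ}
    (hy : t j ≤ y') :
    AgS g U t t ≤ AgS g U (Function.update t j y') (Function.update t j y') := by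
  have hptwise : ∀ i, t i ≤ Function.update t j y' i := by
    intro i
    by_cases h : i = j
    · subst h; rw [Function.update_self]; exact hy
    · rw [Function.update_of_ne h]
  have h1 : AgS g U t t ≤ AgS g U t (Function.update t j y') :=
    primP3 hpdi U hU t t (Function.update t j y') ht ht hptwise
  have h2 : AgS g U t (Function.update t j y')
      = AgS g U (Function.update t j y') (Function.update t j y') :=
    AgS_congr U
      (fun i hiU => (Function.update_of_ne (fun h : i = j => hjU (h ▸ hiU)) y' t).symm)
      (fun i _ => rfl)
  linarith

lemma mono_zero_case (h0 : ∀ t ∈ Qset n, posCount t < k → g t = 0)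
    (U : Finset (Fin n)) (hU : U.card + 1 < k) {j : Fin n} (hjU : j ∉ U)
    {t : Fin n → ℝ} (ht : t ∈ Qset n) {y' : ℝ} (hy : t j ≤ y')
    (hz : ∀ i, i ∉ U → i ≠ j → t i = 0) :
    AgS g U t t ≤ AgS g U (Function.update t j y') (Function.update t j y') := by
  have hy0 : 0 ≤ y' := le_trans (ht j) hy
  have ht' : Function.update t j y' ∈ Qset n := update_mem_Q ht hy0
  have hz1 := AgS_vanish (g := g) h0 U ht {j}
    (fun i hiU hij => hz i hiU (fun h => hij (h ▸ Finset.mem_singleton_self j)))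
    (by rw [Finset.card_singleton]; omega)
  have hz2 := AgS_vanish (g := g) h0 U ht' {j}
    (fun i hiU hij => by
      have hinej : i ≠ j := fun h => hij (h ▸ Finset.mem_singleton_self j)
      rw [Function.update_of_ne hinej]
      exact hz i hiU hinej)
    (by rw [Finset.card_singleton]; omega)
  rw [hz1, hz2]

lemma mono_aux (h0 : ∀ t ∈ Qset n, posCount t < k → g t = 0) (hpdi : PDI n k g) :
    ∀ (N : ℕ) (U : Finset (Fin n)) (j : Fin n) (t : Fin n → ℝ) (y' : ℝ),
      j ∉ U → U.card + 1 ≤ k → t ∈ Qset n → t j ≤ y' →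
      (Finset.univ.filter fun i => i ∉ U ∧ i ≠ j ∧ 0 < t i).card ≤ N →
      AgS g U t t ≤ AgS g U (Function.update t j y') (Function.update t j y') := by
  intro N
  induction N with
  | zero =>
    intro U j t y' hjU hU ht hy hP
    rcases eq_or_lt_of_le hU with hEq | hLt
    · exact mono_top hpdi U hEq hjU ht hy
    · refine mono_zero_case h0 U hLt hjU ht hy ?_
      intro i hiU hij
      by_contra hne
      have hpos : 0 < t i := lt_of_le_of_ne (ht i) (Ne.symm hne)
      have hmem : i ∈ Finset.univ.filter (fun i => i ∉ U ∧ i ≠ j ∧ 0 < t i) := by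
        rw [Finset.mem_filter]; exact ⟨Finset.mem_univ i, hiU, hij, hpos⟩
      have := Finset.card_pos.mpr ⟨i, hmem⟩
      omega
  | succ N ih =>
    intro U j t y' hjU hU ht hy hP
    rcases eq_or_lt_of_le hU with hEq | hLt
    · exact mono_top hpdi U hEq hjU ht hy
    · by_cases hPe : ∃ i, i ∉ U ∧ i ≠ j ∧ 0 < t i
      · obtain ⟨i, hiU, hij, hipos⟩ := hPe
        have hiP : i ∈ Finset.univ.filter (fun i => i ∉ U ∧ i ≠ j ∧ 0 < t i) := by
          rw [Finset.mem_filter]; exact ⟨Finset.mem_univ i, hiU, hij, hipos⟩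
        have hcomm : Function.update (Function.update t j y') i 0
            = Function.update (Function.update t i 0) j y' :=
          Function.update_comm (fun h : j = i => hij h.symm) y' 0 t
        have hsQ : Function.update t i 0 ∈ Qset n := update_mem_Q ht (le_refl 0)
        have hsj : Function.update t i 0 j = t j := Function.update_of_ne (fun h => hij h.symm) 0 t
        have hersub : ∀ (w : Fin n → ℝ), (∀ x, x ≠ i → w x = t x) →
            (Finset.univ.filter fun x => x ∉ U ∧ x ≠ j ∧ 0 < w x)
              ⊆ (Finset.univ.filter fun x => x ∉ U ∧ x ≠ j ∧ 0 < t x).erase i → True := fun _ _ _ => trivial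
        -- card bound for inserted set
        have hb1 : (Finset.univ.filter fun x => x ∉ insert i U ∧ x ≠ j ∧ 0 < t x).card ≤ N := by
          have hsub : (Finset.univ.filter fun x => x ∉ insert i U ∧ x ≠ j ∧ 0 < t x)
              ⊆ (Finset.univ.filter fun x => x ∉ U ∧ x ≠ j ∧ 0 < t x).erase i := by
            intro x hx
            rw [Finset.mem_filter] at hx
            obtain ⟨_, hxiU, hxj, hxpos⟩ := hx
            have hxi : x ≠ i := fun h => hxiU (h ▸ Finset.mem_insert_self i U)
            have hxU : x ∉ U := fun h => hxiU (Finset.mem_insert_of_mem h)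
            rw [Finset.mem_erase, Finset.mem_filter]
            exact ⟨hxi, Finset.mem_univ x, hxU, hxj, hxpos⟩
          have h2 := Finset.card_le_card hsub
          have h3 := Finset.card_erase_of_mem hiP
          have h4 := Finset.card_pos.mpr ⟨i, hiP⟩
          omega
        have hb2 : (Finset.univ.filter fun x =>
            x ∉ U ∧ x ≠ j ∧ 0 < Function.update t i 0 x).card ≤ N := by
          have hsub : (Finset.univ.filter fun x => x ∉ U ∧ x ≠ j ∧ 0 < Function.update t i 0 x)
              ⊆ (Finset.univ.filter fun x => x ∉ U ∧ x ≠ j ∧ 0 < t x).erase i := by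
            intro x hx
            rw [Finset.mem_filter] at hx
            obtain ⟨_, hxU, hxj, hxpos⟩ := hx
            have hxi : x ≠ i := by
              intro h
              rw [h, Function.update_self] at hxpos
              exact lt_irrefl 0 hxpos
            rw [Function.update_of_ne hxi] at hxpos
            rw [Finset.mem_erase, Finset.mem_filter]
            exact ⟨hxi, Finset.mem_univ x, hxU, hxj, hxpos⟩
          have h2 := Finset.card_le_card hsub
          have h3 := Finset.card_erase_of_mem hiP
          have h4 := Finset.card_pos.mpr ⟨i, hiP⟩
          omega
        have hI1 : AgS g (insert i U) t t
            ≤ AgS g (insert i U) (Function.update t j y') (Function.update t j y') := by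
          refine ih (insert i U) j t y' ?_ ?_ ht hy hb1
          · intro h
            rcases Finset.mem_insert.mp h with h' | h'
            · exact hij h'.symm
            · exact hjU h'
          · rw [Finset.card_insert_of_notMem hiU]; omega
        have hI2 : AgS g U (Function.update t i 0) (Function.update t i 0)
            ≤ AgS g U (Function.update (Function.update t i 0) j y')
                (Function.update (Function.update t i 0) j y') := by
          refine ih U j (Function.update t i 0) y' hjU hU hsQ ?_ hb2
          rw [hsj]; exact hy
        have hid1 := AgS_insert (g := g) U hiU t
        have hid2 := AgS_insert (g := g) U hiU (Function.update t j y')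
        rw [hcomm] at hid2
        linarith
      · push_neg at hPe
        refine mono_zero_case h0 U hLt hjU ht hy ?_
        intro i hiU hij
        exact le_antisymm (hPe i hiU hij) (ht i)

lemma mono_step (hk : 1 ≤ k) (h0 : ∀ t ∈ Qset n, posCount t < k → g t = 0)
    (hpdi : PDI n k g) {t : Fin n → ℝ} (ht : t ∈ Qset n) {j : Fin n} {y' : ℝ}
    (hy : t j ≤ y') : g t ≤ g (Function.update t j y') := by
  have h := mono_aux h0 hpdi
    ((Finset.univ.filter fun i => i ∉ (∅ : Finset (Fin n)) ∧ i ≠ j ∧ 0 < t i).card)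
    ∅ j t y' (Finset.notMem_empty j) (by rw [Finset.card_empty]; exact hk) ht hy (le_refl _)
  rwa [AgS_empty, AgS_empty] at h

lemma mono_full (hk : 1 ≤ k) (h0 : ∀ t ∈ Qset n, posCount t < k → g t = 0)
    (hpdi : PDI n k g) {t t' : Fin n → ℝ} (ht : t ∈ Qset n)
    (htt' : ∀ i, t i ≤ t' i) : g t ≤ g t' := by
  have key : ∀ W : Finset (Fin n), g t ≤ g (fun i => if i ∈ W then t' i else t i) := by
    intro W
    induction W using Finset.induction_on with
    | empty =>
      have : (fun i => if i ∈ (∅ : Finset (Fin n)) then t' i else t i) = t := by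
        funext i; rw [if_neg (Finset.notMem_empty i)]
      rw [this]
    | @insert j W hjW ihW =>
      have hmixQ : (fun i => if i ∈ W then t' i else t i) ∈ Qset n := by
        intro i
        dsimp only
        by_cases h : i ∈ W
        · rw [if_pos h]; exact le_trans (ht i) (htt' i)
        · rw [if_neg h]; exact ht i
      have hstep := mono_step hk h0 hpdi hmixQ
        (j := j) (y' := t' j) (by rw [if_neg hjW]; exact htt' j)
      have hupd : Function.update (fun i => if i ∈ W then t' i else t i) j (t' j)
          = (fun i => if i ∈ insert j W then t' i else t i) := by
        funext i
        by_cases h : i = j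
        · subst h
          rw [Function.update_self, if_pos (Finset.mem_insert_self i W)]
        · rw [Function.update_of_ne h]
          by_cases h2 : i ∈ W
          · rw [if_pos h2, if_pos (Finset.mem_insert_of_mem h2)]
          · rw [if_neg h2, if_neg (fun hm => (Finset.mem_insert.mp hm).elim h h2)]
      rw [hupd] at hstep
      exact le_trans ihW hstep
  have h := key Finset.univ
  have : (fun i => if i ∈ (Finset.univ : Finset (Fin n)) then t' i else t i) = t' := by
    funext i; rw [if_pos (Finset.mem_univ i)]
  rwa [this] at h

end Mono
section Upper

variable {n k : ℕ} {g : (Fin n → ℝ) → ℝ}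

lemma g_zero_at_zero (hk : 1 ≤ k) (h0 : ∀ t ∈ Qset n, posCount t < k → g t = 0) :
    g (fun _ => 0) = 0 := by
  refine h0 _ (fun i => le_refl 0) ?_
  have : posCount (fun _ : Fin n => (0 : ℝ)) = 0 := by
    unfold posCount
    rw [Finset.filter_false_of_mem (fun i _ => lt_irrefl 0), Finset.card_empty]
  omega

lemma g_nonneg (hk : 1 ≤ k) (h0 : ∀ t ∈ Qset n, posCount t < k → g t = 0)
    (hpdi : PDI n k g) {t : Fin n → ℝ} (ht : t ∈ Qset n) : 0 ≤ g t := by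
  have h := mono_full hk h0 hpdi (t := fun _ => 0) (t' := t) (fun i => le_refl 0) ht
  rwa [g_zero_at_zero hk h0] at h

lemma keepF_update_zero {t : Fin n → ℝ} {i : Fin n} {F : Finset (Fin n)} (hiF : i ∉ F) :
    keepF (Function.update t i 0) F = keepF t F := by
  funext i'
  unfold keepF
  by_cases h : i' ∈ F
  · rw [if_pos h, if_pos h, Function.update_of_ne (fun hh => hiF (by rw [← hh]; exact h))]
  · rw [if_neg h, if_neg h]

lemma g_keepF_update_zero (h0 : ∀ t ∈ Qset n, posCount t < k → g t = 0)
    {t : Fin n → ℝ} (ht : t ∈ Qset n) {i : Fin n} {F : Finset (Fin n)}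
    (hF : F.card = k) (hiF : i ∈ F) :
    g (keepF (Function.update t i 0) F) = 0 := by
  have htQ : Function.update t i 0 ∈ Qset n := update_mem_Q ht (le_refl 0)
  refine h0 _ (keepF_mem_Q htQ F) ?_
  have hsub : (Finset.univ.filter fun i' => 0 < keepF (Function.update t i 0) F i')
      ⊆ F.erase i := by
    intro x hx
    rw [Finset.mem_filter] at hx
    have hxF : x ∈ F := by
      by_contra h
      rw [show keepF (Function.update t i 0) F x = 0 from if_neg h] at hx
      exact lt_irrefl 0 hx.2
    have hxi : x ≠ i := by
      intro h
      subst h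
      rw [show keepF (Function.update t x 0) F x = Function.update t x 0 x from if_pos hxF,
        Function.update_self] at hx
      exact lt_irrefl 0 hx.2
    exact Finset.mem_erase.mpr ⟨hxi, hxF⟩
  have h1 := Finset.card_le_card hsub
  have h2 := Finset.card_erase_of_mem hiF
  have h3 := Finset.card_pos.mpr ⟨i, hiF⟩
  unfold posCount
  omega

lemma exp_top (hk : 1 ≤ k) (h0 : ∀ t ∈ Qset n, posCount t < k → g t = 0)
    (hpdi : PDI n k g) {t : Fin n → ℝ} (ht : t ∈ Qset n) (U : Finset (Fin n))
    (hU : U.card = k) :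
    AgS g U t t ≤ ∑ F ∈ (Finset.powersetCard k Finset.univ).filter (fun F => U ⊆ F),
        g (keepF t F) := by
  have h1 : AgS g U t t ≤ AgS g U t (fun _ => 0) :=
    primP2 hpdi U hU t (fun _ => 0) t ht (fun i => le_refl 0) ht
  rw [AgS_collapse hk h0 U hU ht] at h1
  refine le_trans h1 (Finset.single_le_sum (f := fun F => g (keepF t F)) ?_ ?_)
  · intro F _
    exact g_nonneg hk h0 hpdi (keepF_mem_Q ht F)
  · rw [Finset.mem_filter, Finset.mem_powersetCard]
    exact ⟨⟨Finset.subset_univ U, hU⟩, le_refl U⟩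

lemma filt_insert_eq (k : ℕ) (U : Finset (Fin n)) (i : Fin n) :
    (Finset.powersetCard k Finset.univ).filter (fun F => insert i U ⊆ F)
      = ((Finset.powersetCard k Finset.univ).filter (fun F => U ⊆ F)).filter
          (fun F => i ∈ F) := by
  rw [Finset.filter_filter]
  refine Finset.filter_congr ?_
  intro F _
  rw [Finset.insert_subset_iff]
  constructor
  · intro h; exact ⟨h.2, h.1⟩
  · intro h; exact ⟨h.2, h.1⟩

lemma exp_aux (hk : 1 ≤ k) (h0 : ∀ t ∈ Qset n, posCount t < k → g t = 0)
    (hpdi : PDI n k g) :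
    ∀ (N : ℕ) (t : Fin n → ℝ) (U : Finset (Fin n)),
      t ∈ Qset n → 1 ≤ U.card → U.card ≤ k →
      (Finset.univ.filter fun i => i ∉ U ∧ 0 < t i).card ≤ N →
      AgS g U t t ≤ ∑ F ∈ (Finset.powersetCard k Finset.univ).filter (fun F => U ⊆ F),
          g (keepF t F) := by
  intro N
  induction N with
  | zero =>
    intro t U ht hU1 hUk hP
    rcases eq_or_lt_of_le hUk with hEq | hLt
    · exact exp_top hk h0 hpdi ht U hEq
    · have hz : AgS g U t t = 0 := by
        refine AgS_vanish h0 U ht ∅ ?_ (by rw [Finset.card_empty]; omega)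
        intro i hiU _
        by_contra hne
        have hpos : 0 < t i := lt_of_le_of_ne (ht i) (Ne.symm hne)
        have hmem : i ∈ Finset.univ.filter (fun i => i ∉ U ∧ 0 < t i) := by
          rw [Finset.mem_filter]; exact ⟨Finset.mem_univ i, hiU, hpos⟩
        have := Finset.card_pos.mpr ⟨i, hmem⟩
        omega
      rw [hz]
      exact Finset.sum_nonneg fun F _ => g_nonneg hk h0 hpdi (keepF_mem_Q ht F)
  | succ N ih =>
    intro t U ht hU1 hUk hP
    rcases eq_or_lt_of_le hUk with hEq | hLt
    · exact exp_top hk h0 hpdi ht U hEq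
    · by_cases hPe : ∃ i, i ∉ U ∧ 0 < t i
      · obtain ⟨i, hiU, hipos⟩ := hPe
        have hiP : i ∈ Finset.univ.filter (fun i => i ∉ U ∧ 0 < t i) := by
          rw [Finset.mem_filter]; exact ⟨Finset.mem_univ i, hiU, hipos⟩
        have hsQ : Function.update t i 0 ∈ Qset n := update_mem_Q ht (le_refl 0)
        have hb1 : (Finset.univ.filter fun x => x ∉ insert i U ∧ 0 < t x).card ≤ N := by
          have hsub : (Finset.univ.filter fun x => x ∉ insert i U ∧ 0 < t x)
              ⊆ (Finset.univ.filter fun x => x ∉ U ∧ 0 < t x).erase i := by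
            intro x hx
            rw [Finset.mem_filter] at hx
            obtain ⟨_, hxiU, hxpos⟩ := hx
            have hxi : x ≠ i := fun h => hxiU (h ▸ Finset.mem_insert_self i U)
            have hxU : x ∉ U := fun h => hxiU (Finset.mem_insert_of_mem h)
            rw [Finset.mem_erase, Finset.mem_filter]
            exact ⟨hxi, Finset.mem_univ x, hxU, hxpos⟩
          have h2 := Finset.card_le_card hsub
          have h3 := Finset.card_erase_of_mem hiP
          have h4 := Finset.card_pos.mpr ⟨i, hiP⟩
          omega
        have hb2 : (Finset.univ.filter fun x =>
            x ∉ U ∧ 0 < Function.update t i 0 x).card ≤ N := by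
          have hsub : (Finset.univ.filter fun x => x ∉ U ∧ 0 < Function.update t i 0 x)
              ⊆ (Finset.univ.filter fun x => x ∉ U ∧ 0 < t x).erase i := by
            intro x hx
            rw [Finset.mem_filter] at hx
            obtain ⟨_, hxU, hxpos⟩ := hx
            have hxi : x ≠ i := by
              intro h
              rw [h, Function.update_self] at hxpos
              exact lt_irrefl 0 hxpos
            rw [Function.update_of_ne hxi] at hxpos
            rw [Finset.mem_erase, Finset.mem_filter]
            exact ⟨hxi, Finset.mem_univ x, hxU, hxpos⟩
          have h2 := Finset.card_le_card hsub
          have h3 := Finset.card_erase_of_mem hiP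
          have h4 := Finset.card_pos.mpr ⟨i, hiP⟩
          omega
        have hI1 : AgS g (insert i U) t t
            ≤ ∑ F ∈ (Finset.powersetCard k Finset.univ).filter (fun F => insert i U ⊆ F),
                g (keepF t F) := by
          refine ih t (insert i U) ht ?_ ?_ hb1
          · rw [Finset.card_insert_of_notMem hiU]; omega
          · rw [Finset.card_insert_of_notMem hiU]; omega
        have hI2 : AgS g U (Function.update t i 0) (Function.update t i 0)
            ≤ ∑ F ∈ (Finset.powersetCard k Finset.univ).filter (fun F => U ⊆ F),
                g (keepF (Function.update t i 0) F) :=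
          ih (Function.update t i 0) U hsQ hU1 hUk hb2
        have hsum2 : (∑ F ∈ (Finset.powersetCard k Finset.univ).filter (fun F => U ⊆ F),
              g (keepF (Function.update t i 0) F))
            = ∑ F ∈ ((Finset.powersetCard k Finset.univ).filter (fun F => U ⊆ F)).filter
                (fun F => ¬ i ∈ F), g (keepF t F) := by
          conv_rhs => rw [Finset.sum_filter]
          refine Finset.sum_congr rfl ?_
          intro F hF
          rw [Finset.mem_filter, Finset.mem_powersetCard] at hF
          by_cases hiF : i ∈ F
          · rw [if_neg (by exact fun h => h hiF),
              g_keepF_update_zero h0 ht hF.1.2 hiF]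
          · rw [if_pos hiF, keepF_update_zero hiF]
        have hfin := Finset.sum_filter_add_sum_filter_not
          ((Finset.powersetCard k Finset.univ).filter (fun F => U ⊆ F))
          (fun F => i ∈ F) (fun F => g (keepF t F))
        have hid := AgS_insert (g := g) U hiU t
        rw [filt_insert_eq k U i] at hI1
        rw [hsum2] at hI2
        linarith
      · push_neg at hPe
        have hz : AgS g U t t = 0 := by
          refine AgS_vanish h0 U ht ∅ ?_ (by rw [Finset.card_empty]; omega)
          intro i hiU _
          exact le_antisymm (hPe i hiU) (ht i)
        rw [hz]
        exact Finset.sum_nonneg fun F _ => g_nonneg hk h0 hpdi (keepF_mem_Q ht F)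

lemma upper_aux (hk : 1 ≤ k) (h0 : ∀ t ∈ Qset n, posCount t < k → g t = 0)
    (hpdi : PDI n k g) :
    ∀ (q : ℕ) (t : Fin n → ℝ), t ∈ Qset n → posCount t ≤ q →
      g t ≤ ∑ F ∈ Finset.powersetCard k Finset.univ, g (keepF t F) := by
  intro q
  induction q with
  | zero =>
    intro t ht hq
    rw [h0 t ht (by omega)]
    exact Finset.sum_nonneg fun F _ => g_nonneg hk h0 hpdi (keepF_mem_Q ht F)
  | succ q ih =>
    intro t ht hq
    by_cases hle : posCount t ≤ q
    · exact ih t ht hle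
    · have hqpos : 1 ≤ posCount t := by omega
      have hne : (Finset.univ.filter fun i => 0 < t i).Nonempty := by
        rw [← Finset.card_pos]
        exact hqpos
      obtain ⟨j, hj⟩ := hne
      have hjpos : 0 < t j := (Finset.mem_filter.mp hj).2
      have hsQ : Function.update t j 0 ∈ Qset n := update_mem_Q ht (le_refl 0)
      have hid := AgS_insert (g := g) ∅ (Finset.notMem_empty j) t
      rw [AgS_empty, AgS_empty] at hid
      rw [show insert j (∅ : Finset (Fin n)) = {j} from rfl] at hid
      have hexp := exp_aux hk h0 hpdi
        ((Finset.univ.filter fun i => i ∉ ({j} : Finset (Fin n)) ∧ 0 < t i).card)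
        t {j} ht (by rw [Finset.card_singleton]) (by rw [Finset.card_singleton]; omega)
        (le_refl _)
      have hpc : posCount (Function.update t j 0) ≤ q := by
        have hsub : (Finset.univ.filter fun x => 0 < Function.update t j 0 x)
            ⊆ (Finset.univ.filter fun x => 0 < t x).erase j := by
          intro x hx
          rw [Finset.mem_filter] at hx
          have hxj : x ≠ j := by
            intro h
            rw [h, Function.update_self] at hx
            exact lt_irrefl 0 hx.2
          rw [Function.update_of_ne hxj] at hx
          rw [Finset.mem_erase, Finset.mem_filter]
          exact ⟨hxj, hx⟩
        have h2 := Finset.card_le_card hsub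
        have h3 := Finset.card_erase_of_mem hj
        unfold posCount at hq ⊢
        omega
      have hih := ih (Function.update t j 0) hsQ hpc
      have hsum2 : (∑ F ∈ Finset.powersetCard k Finset.univ,
            g (keepF (Function.update t j 0) F))
          = ∑ F ∈ (Finset.powersetCard k Finset.univ).filter (fun F => ¬ j ∈ F),
              g (keepF t F) := by
        conv_rhs => rw [Finset.sum_filter]
        refine Finset.sum_congr rfl ?_
        intro F hF
        rw [Finset.mem_powersetCard] at hF
        by_cases hjF : j ∈ F
        · rw [if_neg (by exact fun h => h hjF), g_keepF_update_zero h0 ht hF.2 hjF]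
        · rw [if_pos hjF, keepF_update_zero hjF]
      have hfilt : (Finset.powersetCard k Finset.univ).filter (fun F => ({j} : Finset (Fin n)) ⊆ F)
          = (Finset.powersetCard k Finset.univ).filter (fun F => j ∈ F) := by
        refine Finset.filter_congr ?_
        intro F _
        rw [Finset.singleton_subset_iff]
      have hfin := Finset.sum_filter_add_sum_filter_not
        (Finset.powersetCard k Finset.univ) (fun F => j ∈ F) (fun F => g (keepF t F))
      rw [hfilt] at hexp
      rw [hsum2] at hih
      linarith

end Upper

/-- a continuous `PDI_{k,n}^∞` function vanishing on `∂_{k−1}^n` is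
nonnegative, increasing, and its growth is controlled by its values on `k` variables. -/
theorem statement16 {n : ℕ} (k : ℕ) (hk : 1 ≤ k) (hkn : k < n)
    (g : (Fin n → ℝ) → ℝ) (hg : ContinuousOn g (Qset n))
    (h0 : ∀ t ∈ Qset n, posCount t < k → g t = 0)
    (hpdi : PDI n k g) :
    (∀ t ∈ Qset n, 0 ≤ g t) ∧
    (∀ t t' : Fin n → ℝ, t ∈ Qset n → (∀ i, t i ≤ t' i) → g t ≤ g t') ∧
    (∀ t ∈ Qset n,
      ((n.choose k : ℝ))⁻¹ *
          ∑ F ∈ Finset.powersetCard k (Finset.univ : Finset (Fin n)),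
            g (fun i => if i ∈ F then t i else 0) ≤ g t ∧
      g t ≤ ∑ F ∈ Finset.powersetCard k (Finset.univ : Finset (Fin n)),
            g (fun i => if i ∈ F then t i else 0)) := by
  refine ⟨?_, ?_, ?_⟩
  · intro t ht
    exact g_nonneg hk h0 hpdi ht
  · intro t t' ht htt'
    exact mono_full hk h0 hpdi ht htt'
  · intro t ht
    have hC : (0 : ℝ) < (n.choose k : ℝ) := by
      exact_mod_cast Nat.choose_pos (le_of_lt hkn)
    constructor
    · have hle : ∀ F ∈ Finset.powersetCard k (Finset.univ : Finset (Fin n)),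
          g (fun i => if i ∈ F then t i else 0) ≤ g t := by
        intro F _
        refine mono_full hk h0 hpdi (keepF_mem_Q ht F) ?_
        intro i
        show (if i ∈ F then t i else 0) ≤ t i
        by_cases h : i ∈ F
        · rw [if_pos h]
        · rw [if_neg h]; exact ht i
      have hsum := Finset.sum_le_card_nsmul
        (Finset.powersetCard k (Finset.univ : Finset (Fin n)))
        (fun F => g (fun i => if i ∈ F then t i else 0)) (g t) hle
      rw [Finset.card_powersetCard, Finset.card_univ, Fintype.card_fin,
        nsmul_eq_mul] at hsum
      calc ((n.choose k : ℝ))⁻¹ *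
            ∑ F ∈ Finset.powersetCard k (Finset.univ : Finset (Fin n)),
              g (fun i => if i ∈ F then t i else 0)
          ≤ ((n.choose k : ℝ))⁻¹ * ((n.choose k : ℝ) * g t) :=
            mul_le_mul_of_nonneg_left hsum (inv_nonneg.mpr (le_of_lt hC))
        _ = g t := inv_mul_cancel_left₀ (ne_of_gt hC) _
    · have := upper_aux hk h0 hpdi (posCount t) t ht (le_refl _)
      exact this

end IndepRBF
end
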